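/- arXiv:1307.1768 — 9 statements merged into one kernel-verified Lean document; each statement's English description precedes it below -/
import Mathlib

section
/- For every n ≥ 4, the wheel graph on n vertices (a cycle on n-1 vertices plus a hub vertex joined to all cycle vertices) has exactly 2n-2 edges and contains no proper subgraph of minimum degree at least 3. -/
/-- The wheel graph on `m + 1` vertices: a hub (`none`) joined to all vertices of a
cycle on `m` vertices (`some i`, with `some i` adjacent to `some (i+1)`). -/
def wheelGraph (m : ℕ) : SimpleGraph (Option (Fin m)) :=
  SimpleGraph.fromRel (fun a b =>
    match a, b with
    | none, some _ => True
    | some i, some j => (j : ℕ) = ((i : ℕ) + 1) % m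
    | _, _ => False)

/-! The edge count is the handshake lemma: the hub has degree `m` and each of the `m` rim vertices
has degree `3`. For the second claim, a rim vertex has degree exactly `3` in the wheel, so a subgraph
of minimum degree at least `3` that contains it contains all of its edges, in particular the edge to
its successor on the rim. Walking around the rim, the subgraph contains every rim vertex with all of
its edges, and every edge of the wheel has a rim endpoint. A subgraph containing only the hub is
impossible, since the hub's neighbours are rim vertices. -/

open Fin.NatCast in
theorem Fin.forall_of_add_one_closed {m : ℕ} [NeZero m] {p : Fin m → Prop} {i : Fin m}
    (hi : p i) (hstep : ∀ j, p j → p (j + 1)) (j : Fin m) : p j := by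
  have hreach : ∀ k : ℕ, p (i + k) := by
    intro k
    induction k with
    | zero => simpa using hi
    | succ k ih => simpa [add_assoc] using hstep _ ih
  simpa using hreach (j - i : Fin m)

namespace SimpleGraph

theorem ncard_neighborSet_eq_degree {V : Type*} (G : SimpleGraph V) (v : V)
    [Fintype (G.neighborSet v)] : (G.neighborSet v).ncard = G.degree v := by
  rw [← card_neighborSet_eq_degree, ← Nat.card_eq_fintype_card, Nat.card_coe_set_eq]

namespace Subgraph

variable {V : Type*} {G : SimpleGraph V} (H : G.Subgraph)

theorem neighborSet_eq_of_ncard_le {v : V} (hfin : (G.neighborSet v).Finite)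
    (h : (G.neighborSet v).ncard ≤ (H.neighborSet v).ncard) :
    H.neighborSet v = G.neighborSet v :=
  Set.eq_of_subset_of_ncard_le (H.neighborSet_subset v) h hfin

theorem eq_top_of_forall_mem_verts_of_forall_adj (hverts : ∀ v, v ∈ H.verts)
    (hadj : ∀ ⦃v w⦄, G.Adj v w → H.Adj v w) : H = ⊤ := by
  ext v w
  · simpa using hverts v
  · exact ⟨fun h => H.adj_sub h, fun h => hadj h⟩

end Subgraph

end SimpleGraph

open SimpleGraph

section Wheel

variable {m : ℕ}

theorem wheelGraph_adj_none_some (i : Fin m) : (wheelGraph m).Adj none (some i) := by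
  simp [wheelGraph]

theorem wheelGraph_neighborSet_none : (wheelGraph m).neighborSet none = Set.range some := by
  ext (_ | i) <;> simp [wheelGraph]

theorem wheelGraph_ncard_neighborSet_none : ((wheelGraph m).neighborSet none).ncard = m := by
  rw [wheelGraph_neighborSet_none, ← Set.image_univ, Set.ncard_image_of_injective _
    (Option.some_injective _), Set.ncard_univ, Nat.card_eq_fintype_card, Fintype.card_fin]

variable [NeZero m]

theorem wheelGraph_adj_some_some (hm : 2 ≤ m) {i j : Fin m} :
    (wheelGraph m).Adj (some i) (some j) ↔ j = i + 1 ∨ i = j + 1 := by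
  have hsucc : ∀ a b : Fin m, (b : ℕ) = ((a : ℕ) + 1) % m ↔ b = a + 1 := by
    intro a b
    rw [Fin.ext_iff, Fin.val_add, Fin.val_one', Nat.one_mod_eq_one.mpr (by omega)]
  have h1 : (1 : Fin m) ≠ 0 := by
    simp [Fin.ext_iff, Nat.mod_eq_of_lt (show 1 < m by omega)]
  simp only [wheelGraph, fromRel_adj, ne_eq, Option.some.injEq, hsucc]
  refine and_iff_right_of_imp ?_
  rintro (rfl | rfl) <;> simpa using h1

theorem wheelGraph_neighborSet_some (hm : 2 ≤ m) (i : Fin m) :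
    (wheelGraph m).neighborSet (some i) = {none, some (i + 1), some (i - 1)} := by
  ext (_ | j)
  · simpa using (wheelGraph_adj_none_some i).symm
  · simp [wheelGraph_adj_some_some hm, eq_sub_iff_add_eq, eq_comm]

theorem wheelGraph_ncard_neighborSet_some (hm : 3 ≤ m) (i : Fin m) :
    ((wheelGraph m).neighborSet (some i)).ncard = 3 := by
  have htwo : (1 + 1 : Fin m) ≠ 0 := by
    simp [Fin.ext_iff, Fin.val_add, Nat.mod_eq_of_lt (show 1 < m by omega),
      Nat.mod_eq_of_lt (show 2 < m by omega)]
  have hne : i + 1 ≠ i - 1 := by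
    intro h
    have h' : i + 1 + 1 = i := by rw [h, sub_add_cancel]
    rw [add_assoc, add_eq_left] at h'
    exact htwo h'
  rw [wheelGraph_neighborSet_some (by omega), Set.ncard_insert_of_notMem (by simp),
    Set.ncard_pair (by simpa using hne)]

theorem wheelGraph_edgeSet_ncard (hm : 3 ≤ m) : (wheelGraph m).edgeSet.ncard = 2 * m := by
  classical
  have hsum := sum_degrees_eq_twice_card_edges (wheelGraph m)
  simp only [Fintype.sum_option, ← ncard_neighborSet_eq_degree, wheelGraph_ncard_neighborSet_none,
    wheelGraph_ncard_neighborSet_some hm, Finset.sum_const, Finset.card_univ, Fintype.card_fin,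
    smul_eq_mul] at hsum
  rw [← coe_edgeFinset, Set.ncard_coe_finset]
  omega

end Wheel

section MinDegree

variable {m : ℕ} {H : (wheelGraph m).Subgraph}

theorem wheelGraph_subgraph_exists_some_mem_verts (hne : H.verts.Nonempty)
    (hdeg : ∀ v ∈ H.verts, 3 ≤ (H.neighborSet v).ncard) : ∃ i : Fin m, some i ∈ H.verts := by
  obtain ⟨(_ | i), hv⟩ := hne
  · obtain ⟨(_ | j), hj⟩ : (H.neighborSet none).Nonempty :=
      Set.nonempty_of_ncard_ne_zero (by have := hdeg none hv; omega)
    · exact absurd (H.adj_sub hj) (wheelGraph m).irrefl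
    · exact ⟨j, hj.snd_mem⟩
  · exact ⟨i, hv⟩

variable [NeZero m]

theorem wheelGraph_subgraph_adj_of_three_le (hm : 3 ≤ m) {i : Fin m}
    (hi : 3 ≤ (H.neighborSet (some i)).ncard) {b : Option (Fin m)}
    (hb : (wheelGraph m).Adj (some i) b) : H.Adj (some i) b := by
  have hfull := H.neighborSet_eq_of_ncard_le (Set.toFinite _)
    ((wheelGraph_ncard_neighborSet_some hm i).trans_le hi)
  show b ∈ H.neighborSet (some i)
  rwa [hfull]

theorem wheelGraph_subgraph_eq_top (hm : 3 ≤ m) (hne : H.verts.Nonempty)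
    (hdeg : ∀ v ∈ H.verts, 3 ≤ (H.neighborSet v).ncard) : H = ⊤ := by
  obtain ⟨i, hi⟩ := wheelGraph_subgraph_exists_some_mem_verts hne hdeg
  have hrim : ∀ j, some j ∈ H.verts := Fin.forall_of_add_one_closed hi fun j hj =>
    (wheelGraph_subgraph_adj_of_three_le hm (hdeg _ hj)
      ((wheelGraph_adj_some_some (by omega)).mpr (Or.inl rfl))).snd_mem
  have hrim_adj : ∀ j b, (wheelGraph m).Adj (some j) b → H.Adj (some j) b :=
    fun j _ => wheelGraph_subgraph_adj_of_three_le hm (hdeg _ (hrim j))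
  refine H.eq_top_of_forall_mem_verts_of_forall_adj ?_ ?_
  · rintro (_ | j)
    · exact (hrim_adj i none (wheelGraph_adj_none_some i).symm).snd_mem
    · exact hrim j
  · rintro (_ | v) (_ | w) h
    · exact absurd h (wheelGraph m).irrefl
    · exact (hrim_adj w none h.symm).symm
    · exact hrim_adj v _ h
    · exact hrim_adj v _ h

end MinDegree

/-- For `n ≥ 4`, the wheel graph on `n` vertices has exactly `2n - 2` edges and
contains no proper subgraph of minimum degree at least `3`. -/
theorem wheel_edges_and_no_proper_min_degree_three (n : ℕ) (hn : 4 ≤ n) :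
    (wheelGraph (n - 1)).edgeSet.ncard = 2 * n - 2 ∧
    ∀ H : (wheelGraph (n - 1)).Subgraph, H.verts.Nonempty →
      (∀ v ∈ H.verts, 3 ≤ (H.neighborSet v).ncard) → H = ⊤ := by
  have hm : 3 ≤ n - 1 := by omega
  have : NeZero (n - 1) := ⟨by omega⟩
  refine ⟨?_, fun H hne hdeg => wheelGraph_subgraph_eq_top hm hne hdeg⟩
  rw [wheelGraph_edgeSet_ncard hm]
  omega
end

section
/- The complete tripartite graph with three parts each of size m (so n = 3m vertices and n²/3 edges) has no chordal subgraph with more than 2n-3 edges. -/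
/-!
By induction on the number of vertices, every chordal `K₄`-free graph on `n` vertices has at
most `2n - 3` edges; `K_{m,m,m}` is `K₄`-free, and so is each of its subgraphs.

A complete `K₄`-free graph has at most three vertices. Otherwise pick non-adjacent `a`, `b` and
an inclusion-minimal set `S` separating them (Dirac). `S` is a clique: two non-adjacent
`x, y ∈ S` would be joined by chordless paths through the side `A` of `a` and through the side
of `b`, which together form a cycle of length at least `4` whose only possible chords would join
the two sides. Hence `G[A ∪ S]` and `G[Aᶜ]` are smaller chordal `K₄`-free graphs covering all
edges and sharing exactly the `C(s, 2)` edges of `S`, where `s = |S| ≤ 3`; since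
`2s - 3 ≤ C(s, 2)` for such `s`, their bounds add up to `2n - 3`.
-/

/-- A graph is chordal if every cycle of length at least 4 has a chord: an edge of the
graph between two vertices of the cycle that is not an edge of the cycle. -/
def IsChordal {V : Type*} (G : SimpleGraph V) : Prop :=
  ∀ (v : V) (w : G.Walk v v), w.IsCycle → 4 ≤ w.length →
    ∃ a b, a ∈ w.support ∧ b ∈ w.support ∧ G.Adj a b ∧ s(a, b) ∉ w.edges

open SimpleGraph

variable {V : Type*} {G : SimpleGraph V}

theorem IsChordal.comap {W : Type*} {G' : SimpleGraph W} (f : G ↪g G') (hG' : IsChordal G') :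
    IsChordal G := by
  intro v c hc hlen
  obtain ⟨a, b, ha, hb, hab, hne⟩ :=
    hG' _ (c.map f.toHom) (hc.map f.injective) (by rwa [Walk.length_map])
  simp only [Walk.support_map, List.mem_map] at ha hb
  obtain ⟨a, ha, rfl⟩ := ha
  obtain ⟨b, hb, rfl⟩ := hb
  refine ⟨a, b, ha, hb, f.map_adj_iff.mp hab, fun h => hne ?_⟩
  rw [Walk.edges_map]
  exact List.mem_map_of_mem (f := Sym2.map f) h

namespace SimpleGraph.Walk

variable {u v : V}

theorem exists_length_lt_of_isChord {p : G.Walk u v} {e : Sym2 V} (he : p.IsChord e) :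
    ∃ q : G.Walk u v, q.length < p.length ∧ q.support ⊆ p.support := by
  classical
  induction e using Sym2.ind with | h a b => ?_
  induction p with
  | nil =>
    obtain ⟨hab, -, ha, hb⟩ := isChord_sym2Mk.mp he
    simp only [support_nil, List.mem_singleton] at ha hb
    exact absurd (ha.trans hb.symm) hab.ne
  | @cons u w v huw p ih =>
    obtain ⟨hab, hne, ha, hb⟩ := isChord_sym2Mk.mp he
    simp only [edges_cons, List.mem_cons, not_or, support_cons] at hne ha hb
    by_cases hp : a ∈ p.support ∧ b ∈ p.support
    · obtain ⟨q, hlt, hsub⟩ := ih (isChord_sym2Mk.mpr ⟨hab, hne.2, hp⟩)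
      exact ⟨cons huw q, by simpa using hlt, List.cons_subset_cons _ hsub⟩
    -- otherwise one end of the chord is `u`: jump from `u` straight to the other end
    have shortcut : ∀ c, G.Adj u c → c ∈ p.support → c ≠ w →
        ∃ q : G.Walk u v, q.length < (cons huw p).length ∧ q.support ⊆ (cons huw p).support :=
      fun c huc hc hcw => ⟨cons huc (p.dropUntil c hc),
        by simpa using length_dropUntil_lt_length hc hcw,
        List.cons_subset_cons _ (p.support_dropUntil_subset_support hc)⟩
    rcases ha with rfl | ha
    · have hb : b ∈ p.support := hb.resolve_left fun h => hab.ne h.symm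
      exact shortcut b hab hb (by rintro rfl; exact hne.1 rfl)
    · have hb : b = u := hb.resolve_right fun h => hp ⟨ha, h⟩
      subst hb
      exact shortcut a hab.symm ha (by rintro rfl; exact hne.1 Sym2.eq_swap)

theorem exists_isPath_isChordless (p : G.Walk u v) :
    ∃ q : G.Walk u v, q.IsPath ∧ q.IsChordless ∧ q.support ⊆ p.support := by
  classical
  induction h : p.length using Nat.strong_induction_on generalizing p with | _ n ih => ?_
  by_cases hc : p.bypass.IsChordless
  · exact ⟨p.bypass, p.bypass_isPath, hc, p.support_bypass_subset_support⟩
  · obtain ⟨e, he⟩ : ∃ e, p.bypass.IsChord e := by simpa [IsChordless] using hc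
    obtain ⟨q, hlt, hsub⟩ := exists_length_lt_of_isChord he
    obtain ⟨r, hr, hrc, hrsub⟩ :=
      ih q.length (h ▸ hlt.trans_le p.length_bypass_le_length) q rfl
    exact ⟨r, hr, hrc,
      List.Subset.trans hrsub (List.Subset.trans hsub p.support_bypass_subset_support)⟩

theorem two_le_length_of_not_adj (p : G.Walk u v) (huv : u ≠ v) (h : ¬ G.Adj u v) :
    2 ≤ p.length := by
  by_contra! hlt
  interval_cases hp : p.length
  · exact huv (eq_of_length_eq_zero hp)
  · exact h (adj_of_length_eq_one hp)

theorem IsPath.start_notMem_support_tail {p : G.Walk u v} (hp : p.IsPath) :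
    u ∉ p.support.tail := by
  have := hp.support_nodup
  rw [← cons_tail_support] at this
  exact (List.nodup_cons.mp this).1

end SimpleGraph.Walk

open Walk in
theorem IsChordal.adj_of_walks (hG : IsChordal G) {A B : Set V} (hAB : Disjoint A B)
    (hnadj : ∀ a ∈ A, ∀ b ∈ B, ¬ G.Adj a b) {x y : V} (hxy : x ≠ y)
    (pA : G.Walk x y) (hpA : ∀ z ∈ pA.support, z = x ∨ z = y ∨ z ∈ A)
    (pB : G.Walk x y) (hpB : ∀ z ∈ pB.support, z = x ∨ z = y ∨ z ∈ B) : G.Adj x y := by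
  by_contra hxy'
  obtain ⟨qA, hqA, hcA, hsA⟩ := pA.exists_isPath_isChordless
  obtain ⟨qB, hqB, hcB, hsB⟩ := pB.exists_isPath_isChordless
  have sideA : ∀ z ∈ qA.support, z ∉ qB.support → z ∈ A := fun z hz hzB => by
    rcases hpA z (hsA hz) with rfl | rfl | h
    · exact absurd qB.start_mem_support hzB
    · exact absurd qB.end_mem_support hzB
    · exact h
  have sideB : ∀ z ∈ qB.support, z ∉ qA.support → z ∈ B := fun z hz hzA => by
    rcases hpB z (hsB hz) with rfl | rfl | h
    · exact absurd qA.start_mem_support hzA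
    · exact absurd qA.end_mem_support hzA
    · exact h
  have hcyc : (qA.append qB.reverse).IsCycle := by
    refine hqA.isCycle_append hqB.reverse (fun z hzA hzB => ?_)
      (Or.inl (qA.two_le_length_of_not_adj hxy hxy'))
    have hzx : z ≠ x := fun h => hqA.start_notMem_support_tail (h ▸ hzA)
    have hzy : z ≠ y := fun h => hqB.reverse.start_notMem_support_tail (h ▸ hzB)
    have hzB' : z ∈ qB.support := by
      simpa using List.mem_of_mem_tail hzB
    rcases hpA z (hsA (List.mem_of_mem_tail hzA)) with h | h | h
    · exact hzx h
    · exact hzy h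
    rcases hpB z (hsB hzB') with h' | h' | h'
    · exact hzx h'
    · exact hzy h'
    exact hAB.ne_of_mem h h' rfl
  obtain ⟨a, b, ha, hb, hab, hne⟩ := hG x _ hcyc (by
    have := qA.two_le_length_of_not_adj hxy hxy'
    have := qB.two_le_length_of_not_adj hxy hxy'
    simp only [length_append, length_reverse]
    omega)
  simp only [mem_support_append_iff, support_reverse, List.mem_reverse, edges_append,
    edges_reverse, List.mem_append, not_or] at ha hb hne
  have hA : ¬ (a ∈ qA.support ∧ b ∈ qA.support) := fun h => hne.1 (hcA.mem_edges h.1 h.2 hab)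
  have hB : ¬ (a ∈ qB.support ∧ b ∈ qB.support) := fun h => hne.2 (hcB.mem_edges h.1 h.2 hab)
  rcases ha with ha | ha <;> rcases hb with hb | hb
  · exact hA ⟨ha, hb⟩
  · exact hnadj a (sideA a ha fun h => hB ⟨h, hb⟩) b (sideB b hb fun h => hA ⟨ha, h⟩) hab
  · exact hnadj b (sideA b hb fun h => hB ⟨ha, h⟩) a (sideB a ha fun h => hA ⟨h, hb⟩) hab.symm
  · exact hB ⟨ha, hb⟩

namespace SimpleGraph

def IsSeparator (G : SimpleGraph V) (S : Set V) (a b : V) : Prop :=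
  a ∉ S ∧ b ∉ S ∧ ∀ p : G.Walk a b, ∃ z ∈ p.support, z ∈ S

def reachableAvoiding (G : SimpleGraph V) (S : Set V) (a : V) : Set V :=
  {v | ∃ p : G.Walk a v, ∀ z ∈ p.support, z ∉ S}

variable {S : Set V} {a b u v x y z : V}

theorem IsSeparator.symm (h : G.IsSeparator S a b) : G.IsSeparator S b a := by
  refine ⟨h.2.1, h.1, fun p => ?_⟩
  obtain ⟨z, hz, hzS⟩ := h.2.2 p.reverse
  exact ⟨z, by simpa using hz, hzS⟩

theorem isSeparator_compl_pair (hab : a ≠ b) (h : ¬ G.Adj a b) : G.IsSeparator {a, b}ᶜ a b := by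
  refine ⟨by simp, by simp, fun p => ?_⟩
  obtain ⟨d, hd, hda, hdb⟩ := p.exists_boundary_dart {a} rfl hab.symm
  refine ⟨d.snd, p.dart_snd_mem_support_of_mem_darts hd, ?_⟩
  rw [Set.mem_singleton_iff] at hda hdb
  have hadj := d.adj
  rw [hda] at hadj
  simp only [Set.mem_compl_iff, Set.mem_insert_iff, Set.mem_singleton_iff, not_or]
  exact ⟨hdb, fun hb => h (hb ▸ hadj)⟩

theorem mem_reachableAvoiding_of_mem_support {p : G.Walk a v} (hp : ∀ z ∈ p.support, z ∉ S)
    (hz : z ∈ p.support) : z ∈ G.reachableAvoiding S a := by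
  classical
  exact ⟨p.takeUntil z hz, fun w hw => hp w (p.support_takeUntil_subset_support hz hw)⟩

theorem self_mem_reachableAvoiding (ha : a ∉ S) : a ∈ G.reachableAvoiding S a :=
  ⟨.nil, by simpa using ha⟩

theorem notMem_of_mem_reachableAvoiding (hv : v ∈ G.reachableAvoiding S a) : v ∉ S :=
  let ⟨p, hp⟩ := hv
  hp v p.end_mem_support

theorem mem_reachableAvoiding_of_adj (hu : u ∈ G.reachableAvoiding S a) (huv : G.Adj u v)
    (hv : v ∉ S) : v ∈ G.reachableAvoiding S a := by
  obtain ⟨p, hp⟩ := hu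
  refine ⟨p.concat huv, fun z hz => ?_⟩
  rw [Walk.support_concat, List.mem_append, List.mem_singleton] at hz
  rcases hz with hz | rfl
  · exact hp z hz
  · exact hv

theorem exists_walk_via_reachableAvoiding (hu : u ∈ G.reachableAvoiding S a)
    (hv : v ∈ G.reachableAvoiding S a) (hxu : G.Adj x u) (hvy : G.Adj v y) :
    ∃ p : G.Walk x y, ∀ z ∈ p.support, z = x ∨ z = y ∨ z ∈ G.reachableAvoiding S a := by
  obtain ⟨pu, hpu⟩ := hu
  obtain ⟨pv, hpv⟩ := hv
  refine ⟨.cons hxu ((pu.reverse.append pv).concat hvy), fun z hz => ?_⟩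
  simp only [Walk.support_cons, Walk.support_concat, List.mem_append, List.mem_cons,
    List.mem_nil_iff, or_false, Walk.mem_support_append_iff, Walk.support_reverse,
    List.mem_reverse] at hz
  rcases hz with rfl | (hz | hz) | rfl
  · exact .inl rfl
  · exact .inr (.inr (mem_reachableAvoiding_of_mem_support hpu hz))
  · exact .inr (.inr (mem_reachableAvoiding_of_mem_support hpv hz))
  · exact .inr (.inl rfl)

theorem IsSeparator.disjoint_reachableAvoiding (h : G.IsSeparator S a b) :
    Disjoint (G.reachableAvoiding S a) (G.reachableAvoiding S b) := by
  refine Set.disjoint_left.mpr fun v ⟨pa, hpa⟩ ⟨pb, hpb⟩ => ?_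
  obtain ⟨z, hz, hzS⟩ := h.2.2 (pa.append pb.reverse)
  simp only [Walk.mem_support_append_iff, Walk.support_reverse, List.mem_reverse] at hz
  rcases hz with hz | hz
  · exact hpa z hz hzS
  · exact hpb z hz hzS

theorem IsSeparator.not_adj_of_mem_reachableAvoiding (h : G.IsSeparator S a b)
    (hu : u ∈ G.reachableAvoiding S a) (hv : v ∈ G.reachableAvoiding S b) : ¬ G.Adj u v :=
  fun huv => h.disjoint_reachableAvoiding.ne_of_mem
    (mem_reachableAvoiding_of_adj hu huv (notMem_of_mem_reachableAvoiding hv)) hv rfl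

theorem IsSeparator.exists_adj_of_not_isSeparator_diff (h : G.IsSeparator S a b) (hx : x ∈ S)
    (hmin : ¬ G.IsSeparator (S \ {x}) a b) : ∃ u ∈ G.reachableAvoiding S a, G.Adj u x := by
  classical
  obtain ⟨p, hp⟩ : ∃ p : G.Walk a b, ∀ z ∈ p.support, z ∉ S \ {x} := by
    simpa [IsSeparator, h.1, h.2.1] using hmin
  have hxp : x ∈ p.support := by
    obtain ⟨z, hz, hzS⟩ := h.2.2 p
    have : z = x := by simpa [hzS] using hp z hz
    exact this ▸ hz
  obtain ⟨d, hd, hd₁, hd₂⟩ := (p.takeUntil x hxp).exists_boundary_dart _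
    (self_mem_reachableAvoiding h.1) fun hx' => notMem_of_mem_reachableAvoiding hx' hx
  refine ⟨d.fst, hd₁, ?_⟩
  have hdx : d.snd = x := by
    by_contra hne
    have hd₂p := p.support_takeUntil_subset_support hxp
      ((p.takeUntil x hxp).dart_snd_mem_support_of_mem_darts hd)
    exact hd₂ (mem_reachableAvoiding_of_adj hd₁ d.adj (by simpa [hne] using hp _ hd₂p))
  exact hdx ▸ d.adj

end SimpleGraph

theorem IsChordal.isClique_of_minimal_isSeparator (hG : IsChordal G) {S : Set V} {a b : V}
    (hS : Minimal (G.IsSeparator · a b) S) : G.IsClique S := by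
  intro x hx y hy hxy
  have hmin : ∀ z ∈ S, ¬ G.IsSeparator (S \ {z}) a b := fun z hz =>
    hS.not_prop_of_lt (Set.sdiff_singleton_ssubset.mpr hz)
  obtain ⟨u, hu, hux⟩ := hS.prop.exists_adj_of_not_isSeparator_diff hx (hmin x hx)
  obtain ⟨v, hv, hvy⟩ := hS.prop.exists_adj_of_not_isSeparator_diff hy (hmin y hy)
  obtain ⟨u', hu', hux'⟩ :=
    hS.prop.symm.exists_adj_of_not_isSeparator_diff hx fun h => hmin x hx h.symm
  obtain ⟨v', hv', hvy'⟩ :=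
    hS.prop.symm.exists_adj_of_not_isSeparator_diff hy fun h => hmin y hy h.symm
  obtain ⟨pA, hpA⟩ := exists_walk_via_reachableAvoiding hu hv hux.symm hvy
  obtain ⟨pB, hpB⟩ := exists_walk_via_reachableAvoiding hu' hv' hux'.symm hvy'
  exact hG.adj_of_walks hS.prop.disjoint_reachableAvoiding
    (fun _ h _ h' => hS.prop.not_adj_of_mem_reachableAvoiding h h') hxy pA hpA pB hpB

theorem IsChordal.exists_clique_separator [Finite V] (hG : IsChordal G) {a b : V} (hab : a ≠ b)
    (h : ¬ G.Adj a b) :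
    ∃ A S : Set V, a ∈ A ∧ b ∉ A ∪ S ∧ Disjoint A S ∧ (∀ u ∈ A, ∀ v, G.Adj u v → v ∈ A ∪ S) ∧
      G.IsClique S := by
  obtain ⟨S, -, hS⟩ :=
    exists_minimal_le_of_wellFoundedLT (G.IsSeparator · a b) _ (isSeparator_compl_pair hab h)
  refine ⟨G.reachableAvoiding S a, S, self_mem_reachableAvoiding hS.prop.1, ?_,
    Set.disjoint_left.mpr fun _ => notMem_of_mem_reachableAvoiding, fun u hu v huv => ?_,
    hG.isClique_of_minimal_isSeparator hS⟩
  · rintro (hb | hb)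
    · exact hS.prop.disjoint_reachableAvoiding.ne_of_mem hb
        (self_mem_reachableAvoiding hS.prop.2.1) rfl
    · exact hS.prop.2.1 hb
  · by_cases hv : v ∈ S
    · exact .inr hv
    · exact .inl (mem_reachableAvoiding_of_adj hu huv hv)

namespace SimpleGraph

theorem image_edgeSet_induce (G : SimpleGraph V) (s : Set V) :
    Sym2.map (↑) '' (G.induce s).edgeSet = G.edgeSet ∩ s.sym2 := by
  ext e
  induction e using Sym2.ind with | h u v => ?_
  constructor
  · rintro ⟨e, he, hmap⟩
    induction e using Sym2.ind with | h u' v' => ?_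
    simp only [Sym2.map_mk, Sym2.eq_iff] at hmap
    rcases hmap with ⟨rfl, rfl⟩ | ⟨rfl, rfl⟩
    · exact ⟨he, u'.2, v'.2⟩
    · exact ⟨he.symm, v'.2, u'.2⟩
  · rintro ⟨he, hu, hv⟩
    exact ⟨s(⟨u, hu⟩, ⟨v, hv⟩), he, rfl⟩

theorem ncard_edgeSet_induce (G : SimpleGraph V) (s : Set V) :
    (G.induce s).edgeSet.ncard = (G.edgeSet ∩ s.sym2).ncard := by
  rw [← image_edgeSet_induce, Set.ncard_image_of_injective _
    (Sym2.map.injective Subtype.val_injective)]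

theorem ncard_edgeSet_add_ncard_edgeSet_induce_inter [Finite V] {s t : Set V}
    (h : G.edgeSet ⊆ s.sym2 ∪ t.sym2) :
    G.edgeSet.ncard + (G.induce (s ∩ t)).edgeSet.ncard =
      (G.induce s).edgeSet.ncard + (G.induce t).edgeSet.ncard := by
  simp only [ncard_edgeSet_induce, Set.sym2_inter]
  rw [← Set.ncard_union_add_ncard_inter (G.edgeSet ∩ s.sym2), ← Set.inter_union_distrib_left,
    Set.inter_eq_left.mpr h, Set.inter_inter_distrib_left]

theorem ncard_edgeSet_top [Finite V] :
    (⊤ : SimpleGraph V).edgeSet.ncard = (Nat.card V).choose 2 := by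
  classical
  have := Fintype.ofFinite V
  rw [Set.ncard_eq_toFinset_card', ← edgeFinset, card_edgeFinset_top_eq_card_choose_two,
    Nat.card_eq_fintype_card]

theorem IsClique.ncard_edgeSet_induce [Finite V] {s : Set V} (h : G.IsClique s) :
    (G.induce s).edgeSet.ncard = s.ncard.choose 2 := by
  rw [induce_eq_top.mpr h, ncard_edgeSet_top, Nat.card_coe_set_eq]

theorem edgeSet_subset_sym2_union_compl {A S : Set V}
    (h : ∀ u ∈ A, ∀ v, G.Adj u v → v ∈ A ∪ S) : G.edgeSet ⊆ (A ∪ S).sym2 ∪ Aᶜ.sym2 := by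
  rintro ⟨u, v⟩ huv
  by_cases hu : u ∈ A
  · exact .inl ⟨.inl hu, h u hu v huv⟩
  by_cases hv : v ∈ A
  · exact .inl ⟨h v hv u huv.symm, .inl hv⟩
  · exact .inr ⟨hu, hv⟩

theorem Subgraph.ncard_edgeSet_coe {G : SimpleGraph V} (H : G.Subgraph) :
    H.coe.edgeSet.ncard = H.edgeSet.ncard := by
  rw [← H.image_coe_edgeSet_coe,
    Set.ncard_image_of_injective _ (Sym2.map.injective Subtype.val_injective)]

theorem card_lt_of_cliqueFree_top [Finite V] {n : ℕ} (h : (⊤ : SimpleGraph V).CliqueFree n) :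
    Nat.card V < n := by
  have := Fintype.ofFinite V
  by_contra! hV
  rw [Nat.card_eq_fintype_card] at hV
  exact (IsContained.refl _).not_cliqueFree_card (h.mono hV)

end SimpleGraph

theorem IsChordal.ncard_edgeSet_le [Finite V] (hG : IsChordal G) (h4 : G.CliqueFree 4) :
    G.edgeSet.ncard ≤ 2 * Nat.card V - 3 := by
  induction hn : Nat.card V using Nat.strong_induction_on generalizing V with | _ n ih => ?_
  rcases eq_or_ne G ⊤ with rfl | htop
  · have := hn ▸ card_lt_of_cliqueFree_top h4
    rw [ncard_edgeSet_top, hn]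
    interval_cases n <;> decide
  obtain ⟨a, b, hab, hnadj⟩ := ne_top_iff_exists_not_adj.mp htop
  obtain ⟨A, S, haA, hb, hAS, hclosed, hS⟩ := hG.exists_clique_separator hab hnadj
  have hsplit := ncard_edgeSet_add_ncard_edgeSet_induce_inter
    (edgeSet_subset_sym2_union_compl hclosed)
  rw [Set.union_inter_distrib_right, Set.inter_compl_self, Set.empty_union,
    Set.inter_eq_left.mpr hAS.subset_compl_left, hS.ncard_edgeSet_induce] at hsplit
  have hS4 : S.ncard < 4 := card_lt_of_cliqueFree_top
    (induce_eq_top.mpr hS ▸ h4.comap (Embedding.induce S).isContained)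
  -- the edges shared by the two sides make up for the `3` subtracted twice
  have hchoose : 2 * S.ncard ≤ S.ncard.choose 2 + 3 := by interval_cases S.ncard <;> decide
  have hcardA : (A ∪ S).ncard = A.ncard + S.ncard := Set.ncard_union_eq hAS
  have hA : 0 < A.ncard := (Set.ncard_pos (Set.toFinite A)).mpr ⟨a, haA⟩
  have hAc : A.ncard + Aᶜ.ncard = n := hn ▸ Set.ncard_add_ncard_compl A
  have hAS_lt : (A ∪ S).ncard < n := hn ▸ Set.ncard_lt_card fun h => hb (h ▸ Set.mem_univ b)
  have h₁ := ih _ hAS_lt (hG.comap (Embedding.induce (A ∪ S)))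
    (h4.comap (Embedding.induce _).isContained) rfl
  have h₂ := ih Aᶜ.ncard (by omega) (hG.comap (Embedding.induce Aᶜ))
    (h4.comap (Embedding.induce _).isContained) rfl
  omega

/-- The complete tripartite graph `K_{m,m,m}` (on `n = 3m` vertices, with `n²/3` edges)
has no chordal subgraph with more than `2n - 3` edges. -/
theorem tripartite_chordal_subgraph_bound (m : ℕ)
    (H : (SimpleGraph.completeMultipartiteGraph (fun _ : Fin 3 => Fin m)).Subgraph)
    (hH : IsChordal H.coe) :
    H.edgeSet.ncard ≤ 2 * (3 * m) - 3 := by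
  have h4 : H.coe.CliqueFree 4 :=
    (cliqueFree_completeMultipartiteGraph _ (by simp)).comap H.coe_isContained
  have hcard : Nat.card H.verts ≤ 3 * m := by
    simpa using H.verts.ncard_le_card
  have := hH.ncard_edgeSet_le h4
  rw [← H.ncard_edgeSet_coe]
  omega
end

section
/- For every 2-coloring of the edges of the complete graph K_n and every positive integer k, there exist k vertices and a color i such that all but at most (n-1)/2^k of the remaining vertices send at least one edge of color i to this set of k vertices. -/
open Finset

private lemma fin2_resolve {a i : Fin 2} (h : a ≠ i) : a = i + 1 := by revert a i; decide

private lemma fin2_resolve' {a i : Fin 2} (h : a ≠ i + 1) : a = i := by revert a i; decide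

private lemma two_pow_mul_choose_le (d K : ℕ) :
    2 ^ K * Nat.choose d K ≤ Nat.choose (2 * d) K := by
  induction K with
  | zero => simp
  | succ K ih =>
    rcases le_or_gt d K with h | h
    · rw [Nat.choose_eq_zero_of_lt (by omega)]; simp
    · have key : (2 ^ (K+1) * Nat.choose d (K+1)) * (K+1)
        ≤ (Nat.choose (2*d) (K+1)) * (K+1) := by
        calc (2 ^ (K+1) * Nat.choose d (K+1)) * (K+1)
            = 2 * 2 ^ K * (Nat.choose d (K+1) * (K+1)) := by ring
          _ = 2 * 2 ^ K * (Nat.choose d K * (d - K)) := by rw [Nat.choose_succ_right_eq]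
          _ = (2 ^ K * Nat.choose d K) * (2 * (d - K)) := by ring
          _ ≤ Nat.choose (2*d) K * (2*d - K) := Nat.mul_le_mul ih (by omega)
          _ = Nat.choose (2*d) (K+1) * (K+1) := (Nat.choose_succ_right_eq _ _).symm
      exact Nat.le_of_mul_le_mul_right key (by omega)


private def undomF {n : ℕ} (c : Sym2 (Fin n) → Fin 2) (S : Finset (Fin n)) (i : Fin 2) :
    Finset (Fin n) :=
  univ.filter (fun v => v ∉ S ∧ ¬ ∃ u ∈ S, u ≠ v ∧ c s(u, v) = i)

private lemma mem_undomF {n : ℕ} (c : Sym2 (Fin n) → Fin 2) (S : Finset (Fin n)) (i : Fin 2)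
    (v : Fin n) :
    v ∈ undomF c S i ↔ v ∉ S ∧ ¬ ∃ u ∈ S, u ≠ v ∧ c s(u, v) = i := by
  simp [undomF]

private def NiF {n : ℕ} (c : Sym2 (Fin n) → Fin 2) (U : Finset (Fin n)) (i : Fin 2)
    (v : Fin n) : Finset (Fin n) :=
  U.filter (fun u => u ≠ v ∧ c s(u, v) = i)

private lemma mem_NiF {n : ℕ} (c : Sym2 (Fin n) → Fin 2) (U : Finset (Fin n)) (i : Fin 2)
    (v u : Fin n) : u ∈ NiF c U i v ↔ u ∈ U ∧ u ≠ v ∧ c s(u, v) = i := by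
  simp [NiF]

private lemma main_step {n : ℕ} (c : Sym2 (Fin n) → Fin 2) (k : ℕ) (hk : 1 ≤ k)
    (hkn : k + 1 ≤ n)
    (ih : ∃ S : Finset (Fin n), S.card = k ∧ ∃ i, (undomF c S i).card * 2 ^ k ≤ n - 1) :
    ∃ S : Finset (Fin n), S.card = k + 1 ∧ ∃ i,
      (undomF c S i).card * 2 ^ (k + 1) ≤ n - 1 := by
  obtain ⟨S, hScard, i, hU⟩ := ih
  set U := undomF c S i with hUdef
  by_cases hA : ∃ v, v ∉ S ∧ (U.erase v).card ≤ 2 * (NiF c U i v).card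
  · -- greedy extension in color i
    obtain ⟨v, hvS, hv⟩ := hA
    refine ⟨insert v S, by rw [card_insert_of_notMem hvS, hScard], i, ?_⟩
    have hNsub : NiF c U i v ⊆ U.erase v := by
      intro u hu
      rw [mem_NiF] at hu
      exact mem_erase.mpr ⟨hu.2.1, hu.1⟩
    have hsub : undomF c (insert v S) i ⊆ (U.erase v) \ NiF c U i v := by
      intro u hu
      rw [mem_undomF] at hu
      obtain ⟨hu1, hu2⟩ := hu
      have huS : u ∉ S := fun h => hu1 (mem_insert_of_mem h)
      have huv : u ≠ v := fun h => hu1 (h ▸ mem_insert_self v S)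
      have huU : u ∈ U := by
        rw [hUdef, mem_undomF]
        exact ⟨huS, fun ⟨w, hw, hwu, hcw⟩ => hu2 ⟨w, mem_insert_of_mem hw, hwu, hcw⟩⟩
      refine mem_sdiff.mpr ⟨mem_erase.mpr ⟨huv, huU⟩, ?_⟩
      intro huN
      rw [mem_NiF] at huN
      refine hu2 ⟨v, mem_insert_self v S, Ne.symm huv, ?_⟩
      rw [Sym2.eq_swap]; exact huN.2.2
    have h1 : (undomF c (insert v S) i).card ≤ (U.erase v).card - (NiF c U i v).card :=
      (card_le_card hsub).trans (le_of_eq (card_sdiff_of_subset hNsub))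
    have h2 : (U.erase v).card ≤ U.card := card_le_card (erase_subset _ _)
    have h3 : (NiF c U i v).card ≤ (U.erase v).card := card_le_card hNsub
    have h4 : (undomF c (insert v S) i).card * 2 ≤ U.card := by omega
    calc (undomF c (insert v S) i).card * 2 ^ (k+1)
        = ((undomF c (insert v S) i).card * 2) * 2 ^ k := by ring
      _ ≤ U.card * 2 ^ k := Nat.mul_le_mul_right _ h4
      _ ≤ n - 1 := hU
  · push_neg at hA
    have hSne : ∃ v₀, v₀ ∉ S := by
      by_contra h
      push_neg at h
      have : (univ : Finset (Fin n)) ⊆ S := fun x _ => h x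
      have := card_le_card this
      simp [hScard] at this
      omega
    obtain ⟨v₀, hv₀⟩ := hSne
    have hUne : U.Nonempty := by
      have h := hA v₀ hv₀
      have : 0 < (U.erase v₀).card := by omega
      exact Finset.Nonempty.mono (erase_subset _ _) (card_pos.mp this)
    have hdle : ∀ v, v ∉ S → 2 * (NiF c U i v).card ≤ U.card := by
      intro v hv
      have h := hA v hv
      have := card_le_card (erase_subset v U)
      omega
    have hdS : ∀ v ∈ S, NiF c U i v = ∅ := by
      intro v hv
      rw [eq_empty_iff_forall_notMem]
      intro u hu
      rw [mem_NiF] at hu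
      obtain ⟨huU, hne, hc⟩ := hu
      rw [hUdef, mem_undomF] at huU
      refine huU.2 ⟨v, hv, Ne.symm hne, ?_⟩
      rw [Sym2.eq_swap]; exact hc
    by_cases hsize : U.card ≤ k + 1
    · -- small undominated set: cover it entirely, use opposite color
      obtain ⟨T, hUT, hTcard⟩ := exists_superset_card_eq hsize (by simpa using hkn)
      refine ⟨T, hTcard, i + 1, ?_⟩
      have hempty : undomF c T (i+1) = ∅ := by
        rw [eq_empty_iff_forall_notMem]
        intro v hv
        rw [mem_undomF] at hv
        obtain ⟨hvT, hvdom⟩ := hv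
        by_cases hvS : v ∈ S
        · obtain ⟨u, huU⟩ := hUne
          have humem := (mem_undomF c S i u).mp huU
          have hneq : u ≠ v := fun h => humem.1 (h ▸ hvS)
          have hnc : ¬ (c s(v, u) = i) := fun hcon => humem.2 ⟨v, hvS, Ne.symm hneq, hcon⟩
          refine hvdom ⟨u, hUT huU, hneq, ?_⟩
          rw [Sym2.eq_swap]
          exact fin2_resolve hnc
        · have hvU : v ∉ U := fun h => hvT (hUT h)
          have h2 := hA v hvS
          rw [erase_eq_of_notMem hvU] at h2
          obtain ⟨u, huU, hunot⟩ : ∃ u ∈ U, ¬(u ≠ v ∧ c s(u,v) = i) := by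
            by_contra hcon
            push_neg at hcon
            have : U.filter (fun u => u ≠ v ∧ c s(u,v) = i) = U :=
              filter_eq_self.mpr hcon
            rw [NiF] at h2
            rw [this] at h2
            omega
          have huv : u ≠ v := fun h => hvU (h ▸ huU)
          have : c s(u,v) = i + 1 := fin2_resolve (fun hc => hunot ⟨huv, hc⟩)
          exact hvdom ⟨u, hUT huU, huv, this⟩
      rw [hempty]
      simp
    · -- counting argument over all (k+1)-subsets of U
      push_neg at hsize
      set K := k + 1 with hK
      set 𝒯 := U.powersetCard K with h𝒯
      have h𝒯ne : 𝒯.Nonempty := powersetCard_nonempty.mpr (le_of_lt hsize)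
      classical
      set Bad : Finset (Fin n) → Finset (Fin n) :=
        fun T => univ.filter (fun v => v ∉ T ∧ ∀ u ∈ T, c s(u, v) = i) with hBad
      obtain ⟨T, hT𝒯, hTmin⟩ := 𝒯.exists_min_image (fun T => (Bad T).card) h𝒯ne
      have hswap : ∑ T ∈ 𝒯, (Bad T).card = ∑ v : Fin n, ((NiF c U i v).card).choose K := by
        have step1 : ∀ T, (Bad T).card
            = ∑ v : Fin n, if v ∉ T ∧ ∀ u ∈ T, c s(u, v) = i then 1 else 0 := by
          intro T
          rw [hBad]
          exact card_filter _ _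
        calc ∑ T ∈ 𝒯, (Bad T).card
            = ∑ T ∈ 𝒯, ∑ v : Fin n, (if v ∉ T ∧ ∀ u ∈ T, c s(u, v) = i then 1 else 0) := by
              exact Finset.sum_congr rfl (fun T _ => step1 T)
          _ = ∑ v : Fin n, ∑ T ∈ 𝒯, (if v ∉ T ∧ ∀ u ∈ T, c s(u, v) = i then 1 else 0) :=
              Finset.sum_comm
          _ = ∑ v : Fin n, ((NiF c U i v).card).choose K := by
              refine Finset.sum_congr rfl (fun v _ => ?_)
              rw [← card_filter]
              have hfe : 𝒯.filter (fun T => v ∉ T ∧ ∀ u ∈ T, c s(u, v) = i)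
                  = (NiF c U i v).powersetCard K := by
                ext T
                simp only [mem_filter, mem_powersetCard, h𝒯]
                constructor
                · rintro ⟨⟨hTU, hTc⟩, hvT, hall⟩
                  refine ⟨?_, hTc⟩
                  intro u huT
                  rw [mem_NiF]
                  exact ⟨hTU huT, fun h => hvT (h ▸ huT), hall u huT⟩
                · rintro ⟨hTN, hTc⟩
                  have hTU : T ⊆ U := fun u hu => ((mem_NiF c U i v u).mp (hTN hu)).1
                  refine ⟨⟨hTU, hTc⟩, ?_, ?_⟩
                  · intro hvT
                    exact ((mem_NiF c U i v v).mp (hTN hvT)).2.1 rfl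
                  · intro u huT
                    exact ((mem_NiF c U i v u).mp (hTN huT)).2.2
              rw [hfe, card_powersetCard]
      have hterm : ∀ v : Fin n, 2 ^ K * ((NiF c U i v).card).choose K
          ≤ (if v ∈ S then 0 else U.card.choose K) := by
        intro v
        by_cases hvS : v ∈ S
        · simp [hvS, hdS v hvS, hK, Nat.choose_zero_succ]
        · simp only [hvS, if_false]
          calc 2 ^ K * ((NiF c U i v).card).choose K
              ≤ (2 * (NiF c U i v).card).choose K := two_pow_mul_choose_le _ _
            _ ≤ U.card.choose K := Nat.choose_le_choose _ (hdle v hvS)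
      have hsum2 : 2 ^ K * ∑ T ∈ 𝒯, (Bad T).card ≤ (n - 1) * U.card.choose K := by
        rw [hswap, mul_sum]
        calc ∑ v : Fin n, 2 ^ K * ((NiF c U i v).card).choose K
            ≤ ∑ v : Fin n, (if v ∈ S then 0 else U.card.choose K) :=
              Finset.sum_le_sum (fun v _ => hterm v)
          _ = (n - k) * U.card.choose K := by
              rw [Finset.sum_ite, Finset.sum_const, Finset.sum_const]
              have h6 : univ.filter (fun v : Fin n => ¬ v ∈ S) = Sᶜ := by
                ext x; simp
              rw [h6, card_compl, Fintype.card_fin, hScard]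
              simp [smul_eq_mul]
          _ ≤ (n - 1) * U.card.choose K := Nat.mul_le_mul_right _ (by omega)
      have hCpos : 0 < U.card.choose K := Nat.choose_pos (le_of_lt hsize)
      have hmin : U.card.choose K * (Bad T).card ≤ ∑ T' ∈ 𝒯, (Bad T').card := by
        have := Finset.card_nsmul_le_sum 𝒯 (fun T' => (Bad T').card) ((Bad T).card)
          (fun T' hT' => hTmin T' hT')
        rw [card_powersetCard] at this
        simpa [smul_eq_mul] using this
      have hfinal : (Bad T).card * 2 ^ K ≤ n - 1 := by
        have h5 : U.card.choose K * ((Bad T).card * 2 ^ K)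
            ≤ U.card.choose K * (n - 1) := by
          calc U.card.choose K * ((Bad T).card * 2 ^ K)
              = 2 ^ K * (U.card.choose K * (Bad T).card) := by ring
            _ ≤ 2 ^ K * ∑ T' ∈ 𝒯, (Bad T').card := Nat.mul_le_mul_left _ hmin
            _ ≤ (n - 1) * U.card.choose K := hsum2
            _ = U.card.choose K * (n - 1) := by ring
        exact Nat.le_of_mul_le_mul_left h5 hCpos
      have hsubBad : undomF c T (i + 1) ⊆ Bad T := by
        intro v hv
        rw [mem_undomF] at hv
        obtain ⟨hvT, hvdom⟩ := hv
        rw [hBad, mem_filter]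
        refine ⟨mem_univ v, hvT, ?_⟩
        intro u huT
        have huv : u ≠ v := fun h => hvT (h ▸ huT)
        exact fin2_resolve' (fun hc => hvdom ⟨u, huT, huv, hc⟩)
      have hTcard : T.card = K := (mem_powersetCard.mp hT𝒯).2
      exact ⟨T, hTcard, i + 1,
        le_trans (Nat.mul_le_mul_right _ (card_le_card hsubBad)) hfinal⟩

private lemma main_base {n : ℕ} (c : Sym2 (Fin n) → Fin 2) (hn : 1 ≤ n) :
    ∃ S : Finset (Fin n), S.card = 1 ∧ ∃ i, (undomF c S i).card * 2 ^ 1 ≤ n - 1 := by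
  have hv : (0 : ℕ) < n := hn
  set v : Fin n := ⟨0, hv⟩ with hvdef
  set W := (univ : Finset (Fin n)).erase v with hWdef
  have hWcard : W.card = n - 1 := by
    rw [hWdef, card_erase_of_mem (mem_univ v), card_univ, Fintype.card_fin]
  have hneg : ∀ a : Fin 2, (¬ a = 0) ↔ a = 1 := by decide
  have hsplit : (W.filter (fun u => c s(v,u) = 0)).card
      + (W.filter (fun u => c s(v,u) = 1)).card = n - 1 := by
    rw [← hWcard]
    have h := Finset.card_filter_add_card_filter_not
      (s := W) (p := fun u => c s(v,u) = 0)
    rw [← h]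
    congr 1
    exact congrArg Finset.card (filter_congr (fun u _ => hneg (c s(v,u)))).symm
  have hsub : ∀ i : Fin 2, undomF c {v} i ⊆ W.filter (fun u => c s(v,u) = i + 1) := by
    intro i u hu
    rw [mem_undomF] at hu
    have huv : u ≠ v := by simpa using hu.1
    refine mem_filter.mpr ⟨mem_erase.mpr ⟨huv, mem_univ u⟩, ?_⟩
    exact fin2_resolve (fun hc => hu.2 ⟨v, mem_singleton_self v, Ne.symm huv, hc⟩)
  rcases le_total ((W.filter (fun u => c s(v,u) = 0)).card)
      ((W.filter (fun u => c s(v,u) = 1)).card) with h | h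
  · refine ⟨{v}, card_singleton v, 1, ?_⟩
    have h1 : undomF c {v} 1 ⊆ W.filter (fun u => c s(v,u) = 0) := by
      have := hsub 1
      have he : (1 : Fin 2) + 1 = 0 := by decide
      rwa [he] at this
    have := card_le_card h1
    omega
  · refine ⟨{v}, card_singleton v, 0, ?_⟩
    have h1 : undomF c {v} 0 ⊆ W.filter (fun u => c s(v,u) = 1) := by
      have := hsub 0
      have he : (0 : Fin 2) + 1 = 1 := by decide
      rwa [he] at this
    have := card_le_card h1
    omega

private lemma main_all {n : ℕ} (c : Sym2 (Fin n) → Fin 2) :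
    ∀ k, 1 ≤ k → k ≤ n → ∃ S : Finset (Fin n), S.card = k ∧ ∃ i,
      (undomF c S i).card * 2 ^ k ≤ n - 1 := by
  intro k hk
  induction k, hk using Nat.le_induction with
  | base => exact fun hn => main_base c hn
  | succ k hk ih =>
    intro hkn
    exact main_step c k hk hkn (ih (by omega))

/-- In every 2-coloring of the edges of `K_n`, for every `k ≥ 1` there exist `k`
vertices and a color `i` such that all but at most `(n-1)/2^k` of the remaining
vertices send at least one edge of color `i` to this set. -/
theorem two_color_domination (n k : ℕ) (hk : 1 ≤ k) (hkn : k ≤ n)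
    (c : Sym2 (Fin n) → Fin 2) :
    ∃ S : Finset (Fin n), S.card = k ∧ ∃ i : Fin 2,
      (({v : Fin n | v ∉ S ∧ ¬ ∃ u ∈ S, u ≠ v ∧ c s(u, v) = i}.ncard : ℝ)) ≤
        ((n : ℝ) - 1) / 2 ^ k := by
  obtain ⟨S, hS, i, hle⟩ := main_all c k hk hkn
  refine ⟨S, hS, i, ?_⟩
  have hset : {v : Fin n | v ∉ S ∧ ¬ ∃ u ∈ S, u ≠ v ∧ c s(u, v) = i}
      = ↑(undomF c S i) := by
    ext v; simp [undomF]
  rw [hset, Set.ncard_coe_finset]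
  have h2 : (0:ℝ) < 2 ^ k := by positivity
  rw [le_div_iff₀ h2]
  have hn : 1 ≤ n := le_trans hk hkn
  have hcast : (((undomF c S i).card * 2 ^ k : ℕ) : ℝ) ≤ ((n - 1 : ℕ) : ℝ) :=
    Nat.cast_le.mpr hle
  push_cast [Nat.cast_sub hn] at hcast
  convert hcast using 2
end

section
/- For every 2-coloring of the edges of the complete graph K_n, the vertex set can be covered by the vertex sets of two monochromatic paths (possibly of different colors). -/
open SimpleGraph

/-- Invariant: `S` is covered either by one monochromatic path (support exactly `S`),
or by two vertex-disjoint monochromatic paths of different colors whose supports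
partition `S`. -/
def GoodCover (n : ℕ) (c : Sym2 (Fin n) → Fin 2) (S : Finset (Fin n)) : Prop :=
  (∃ (i : Fin 2) (u w : Fin n) (p : (⊤ : SimpleGraph (Fin n)).Walk u w),
      p.IsPath ∧ (∀ e ∈ p.edges, c e = i) ∧ (∀ x, x ∈ p.support ↔ x ∈ S)) ∨
  (∃ (i j : Fin 2) (u₁ w₁ u₂ w₂ : Fin n)
      (p : (⊤ : SimpleGraph (Fin n)).Walk u₁ w₁)
      (q : (⊤ : SimpleGraph (Fin n)).Walk u₂ w₂),
      i ≠ j ∧ p.IsPath ∧ q.IsPath ∧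
      (∀ e ∈ p.edges, c e = i) ∧ (∀ e ∈ q.edges, c e = j) ∧
      (∀ x ∈ p.support, x ∉ q.support) ∧
      (∀ x ∈ p.support, x ∈ S) ∧ (∀ x ∈ q.support, x ∈ S) ∧
      (∀ x ∈ S, x ∈ p.support ∨ x ∈ q.support))

lemma step (n : ℕ) (c : Sym2 (Fin n) → Fin 2) (S : Finset (Fin n)) (a : Fin n)
    (ha : a ∉ S) (i j : Fin 2) (hij : i ≠ j) (u₁ w₁ u₂ w₂ : Fin n)
    (p : (⊤ : SimpleGraph (Fin n)).Walk u₁ w₁)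
    (q : (⊤ : SimpleGraph (Fin n)).Walk u₂ w₂)
    (hp : p.IsPath) (hq : q.IsPath)
    (hpc : ∀ e ∈ p.edges, c e = i) (hqc : ∀ e ∈ q.edges, c e = j)
    (hdisj : ∀ x ∈ p.support, x ∉ q.support)
    (hpS : ∀ x ∈ p.support, x ∈ S) (hqS : ∀ x ∈ q.support, x ∈ S)
    (hcov : ∀ x ∈ S, x ∈ p.support ∨ x ∈ q.support)
    (h2 : c s(a, u₂) = i) (he : c s(u₁, u₂) = i) :
    GoodCover n c (insert a S) := by
  have hu12 : u₁ ≠ u₂ := fun h => hdisj u₁ p.start_mem_support (h ▸ q.start_mem_support)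
  have hau2 : a ≠ u₂ := fun h => ha (h ▸ hqS u₂ q.start_mem_support)
  have hu2p : u₂ ∉ p.support := fun h => hdisj u₂ h q.start_mem_support
  have hap : a ∉ p.support := fun h => ha (hpS a h)
  have adj1 : (⊤ : SimpleGraph (Fin n)).Adj u₂ u₁ := by simp [hu12.symm]
  have adj2 : (⊤ : SimpleGraph (Fin n)).Adj a u₂ := by simp [hau2]
  set P : (⊤ : SimpleGraph (Fin n)).Walk a w₁ := Walk.cons adj2 (Walk.cons adj1 p) with hP
  have hPpath : P.IsPath := by
    rw [hP, Walk.cons_isPath_iff, Walk.cons_isPath_iff]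
    exact ⟨⟨hp, hu2p⟩, by simp [hau2, hap]⟩
  have hPc : ∀ e ∈ P.edges, c e = i := by
    intro e he'
    rw [hP] at he'
    simp only [Walk.edges_cons, List.mem_cons] at he'
    rcases he' with rfl | rfl | hmem
    · exact h2
    · rwa [Sym2.eq_swap]
    · exact hpc e hmem
  have hPsupp : P.support = a :: u₂ :: p.support := by simp [hP]
  cases q with
  | nil =>
    left
    refine ⟨i, a, w₁, P, hPpath, hPc, fun x => ?_⟩
    constructor
    · intro hx
      rw [hPsupp, List.mem_cons, List.mem_cons] at hx
      rcases hx with h | h | h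
      · simp [h]
      · exact Finset.mem_insert_of_mem (hqS x (by simp [h]))
      · exact Finset.mem_insert_of_mem (hpS x h)
    · intro hx
      rcases Finset.mem_insert.1 hx with rfl | hx
      · rw [hPsupp]; simp
      · rcases hcov x hx with h | h
        · rw [hPsupp]; simp [h]
        · simp only [Walk.support_nil, List.mem_singleton] at h
          rw [hPsupp]; simp [h]
  | @cons _ y _ hadj q' =>
    right
    have hq'path : q'.IsPath := hq.of_cons
    have hu2q' : u₂ ∉ q'.support := ((Walk.cons_isPath_iff _ _).1 hq).2
    refine ⟨i, j, a, w₁, y, w₂, P, q', hij, hPpath, hq'path, hPc,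
      fun e he' => hqc e (by simp [he']), ?_, ?_, ?_, ?_⟩
    · intro x hx
      rw [hPsupp, List.mem_cons, List.mem_cons] at hx
      rcases hx with rfl | rfl | h
      · exact fun h' => ha (hqS x (by simp [h']))
      · exact hu2q'
      · exact fun h' => hdisj x h (by simp [h'])
    · intro x hx
      rw [hPsupp, List.mem_cons, List.mem_cons] at hx
      rcases hx with rfl | rfl | h
      · exact Finset.mem_insert_self _ _
      · exact Finset.mem_insert_of_mem (hqS x (Walk.start_mem_support _))
      · exact Finset.mem_insert_of_mem (hpS x h)
    · intro x hx
      exact Finset.mem_insert_of_mem (hqS x (by simp [hx]))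
    · intro x hx
      rcases Finset.mem_insert.1 hx with rfl | hx
      · left; rw [hPsupp]; simp
      · rcases hcov x hx with h | h
        · left; rw [hPsupp]; simp [h]
        · simp only [Walk.support_cons, List.mem_cons] at h
          rcases h with rfl | h
          · left; rw [hPsupp]; simp
          · right; exact h

lemma two_of_ne {i j x : Fin 2} (hij : i ≠ j) (hx : x ≠ i) : x = j := by
  fin_cases i <;> fin_cases j <;> fin_cases x <;> simp_all

lemma goodCover_of_nonempty (n : ℕ) (c : Sym2 (Fin n) → Fin 2) (S : Finset (Fin n))
    (hS : S.Nonempty) : GoodCover n c S := by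
  classical
  induction S using Finset.induction_on with
  | empty => exact absurd hS (by simp)
  | @insert a S ha ih =>
    by_cases hE : S = ∅
    · subst hE
      left
      exact ⟨0, a, a, Walk.nil, by simp, by simp, fun x => by simp [eq_comm]⟩
    · rcases ih (Finset.nonempty_of_ne_empty hE) with
        ⟨i, u, w, p, hp, hpc, hsupp⟩ |
        ⟨i, j, u₁, w₁, u₂, w₂, p, q, hij, hp, hq, hpc, hqc, hdisj, hpS, hqS, hcov⟩
      · -- one path covering S: add `a` as a separate trivial path of the other color
        right
        refine ⟨i, if i = 0 then 1 else 0, u, w, a, a, p, Walk.nil, ?_, hp, by simp,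
          hpc, by simp, ?_, ?_, ?_, ?_⟩
        · fin_cases i <;> simp
        · intro x hx
          simp only [Walk.support_nil, List.mem_singleton]
          rintro rfl
          exact ha ((hsupp x).1 hx)
        · exact fun x hx => Finset.mem_insert_of_mem ((hsupp x).1 hx)
        · intro x hx
          simp only [Walk.support_nil, List.mem_singleton] at hx
          simp [hx]
        · intro x hx
          rcases Finset.mem_insert.1 hx with rfl | hx
          · right; simp
          · left; exact (hsupp x).2 hx
      · -- two disjoint paths
        have hau1 : a ≠ u₁ := fun h => ha (h ▸ hpS u₁ p.start_mem_support)
        have hau2 : a ≠ u₂ := fun h => ha (h ▸ hqS u₂ q.start_mem_support)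
        have hap : a ∉ p.support := fun h => ha (hpS a h)
        have haq : a ∉ q.support := fun h => ha (hqS a h)
        by_cases h1 : c s(a, u₁) = i
        · -- extend p
          right
          have adj : (⊤ : SimpleGraph (Fin n)).Adj a u₁ := by simp [hau1]
          refine ⟨i, j, a, w₁, u₂, w₂, Walk.cons adj p, q, hij,
            (Walk.cons_isPath_iff _ _).2 ⟨hp, hap⟩, hq, ?_, hqc, ?_, ?_, ?_, ?_⟩
          · intro e he'
            simp only [Walk.edges_cons, List.mem_cons] at he'
            rcases he' with rfl | h
            · exact h1
            · exact hpc e h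
          · intro x hx
            simp only [Walk.support_cons, List.mem_cons] at hx
            rcases hx with rfl | h
            · exact haq
            · exact hdisj x h
          · intro x hx
            simp only [Walk.support_cons, List.mem_cons] at hx
            rcases hx with rfl | h
            · exact Finset.mem_insert_self _ _
            · exact Finset.mem_insert_of_mem (hpS x h)
          · exact fun x hx => Finset.mem_insert_of_mem (hqS x hx)
          · intro x hx
            rcases Finset.mem_insert.1 hx with rfl | hx
            · left; simp
            · rcases hcov x hx with h | h
              · left; simp [h]
              · right; exact h
        · by_cases h2 : c s(a, u₂) = j
          · -- extend q
            right
            have adj : (⊤ : SimpleGraph (Fin n)).Adj a u₂ := by simp [hau2]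
            refine ⟨i, j, u₁, w₁, a, w₂, p, Walk.cons adj q, hij, hp,
              (Walk.cons_isPath_iff _ _).2 ⟨hq, haq⟩, hpc, ?_, ?_, ?_, ?_, ?_⟩
            · intro e he'
              simp only [Walk.edges_cons, List.mem_cons] at he'
              rcases he' with rfl | h
              · exact h2
              · exact hqc e h
            · intro x hx
              simp only [Walk.support_cons, List.mem_cons]
              push_neg
              exact ⟨fun h => hap (h ▸ hx), hdisj x hx⟩
            · exact fun x hx => Finset.mem_insert_of_mem (hpS x hx)
            · intro x hx
              simp only [Walk.support_cons, List.mem_cons] at hx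
              rcases hx with rfl | h
              · exact Finset.mem_insert_self _ _
              · exact Finset.mem_insert_of_mem (hqS x h)
            · intro x hx
              rcases Finset.mem_insert.1 hx with rfl | hx
              · right; simp
              · rcases hcov x hx with h | h
                · left; exact h
                · right; simp [h]
          · -- c s(a,u₁) = j, c s(a,u₂) = i
            have h1' : c s(a, u₁) = j := two_of_ne hij h1
            have h2' : c s(a, u₂) = i := two_of_ne hij.symm h2
            by_cases he : c s(u₁, u₂) = i
            · exact step n c S a ha i j hij u₁ w₁ u₂ w₂ p q hp hq hpc hqc hdisj
                hpS hqS hcov h2' he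
            · have he' : c s(u₂, u₁) = j := by
                rw [Sym2.eq_swap]; exact two_of_ne hij he
              exact step n c S a ha j i hij.symm u₂ w₂ u₁ w₁ q p hq hp hqc hpc
                (fun x hx h => hdisj x h hx) hqS hpS
                (fun x hx => (hcov x hx).symm) h1' he'

/-- In every 2-coloring of the edges of `K_n` (`n ≥ 1`), the vertex set can be covered
by the vertex sets of two monochromatic paths (possibly of different colors, possibly
sharing vertices). -/
theorem cover_by_two_mono_paths (n : ℕ) (hn : 0 < n) (c : Sym2 (Fin n) → Fin 2) :
    ∃ (u₁ v₁ u₂ v₂ : Fin n) (p₁ : (⊤ : SimpleGraph (Fin n)).Walk u₁ v₁)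
      (p₂ : (⊤ : SimpleGraph (Fin n)).Walk u₂ v₂),
      p₁.IsPath ∧ p₂.IsPath ∧
      (∃ i : Fin 2, ∀ e ∈ p₁.edges, c e = i) ∧
      (∃ i : Fin 2, ∀ e ∈ p₂.edges, c e = i) ∧
      ∀ v : Fin n, v ∈ p₁.support ∨ v ∈ p₂.support := by
  have : (Finset.univ : Finset (Fin n)).Nonempty := by
    simpa [Finset.univ_nonempty_iff] using Fin.pos_iff_nonempty.1 hn
  rcases goodCover_of_nonempty n c Finset.univ this with
    ⟨i, u, w, p, hp, hpc, hsupp⟩ |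
    ⟨i, j, u₁, w₁, u₂, w₂, p, q, hij, hp, hq, hpc, hqc, hdisj, hpS, hqS, hcov⟩
  · exact ⟨u, w, u, w, p, p, hp, hp, ⟨i, hpc⟩, ⟨i, hpc⟩,
      fun v => Or.inl ((hsupp v).2 (Finset.mem_univ v))⟩
  · exact ⟨u₁, w₁, u₂, w₂, p, q, hp, hq, ⟨i, hpc⟩, ⟨j, hqc⟩,
      fun v => hcov v (Finset.mem_univ v)⟩
end

section
/- For every connected triangle-free graph G on n vertices, one can add at most n-1 edges to G so that the resulting graph is triangle-free and has diameter at most 3. -/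
set_option linter.unusedSectionVars false
set_option linter.unreachableTactic false
set_option linter.unusedTactic false

namespace DiamThreeAux

open SimpleGraph

variable {V : Type*} [Fintype V] [DecidableEq V]

/-- `u` and `v` are equal or adjacent. -/
def L1 (H : SimpleGraph V) (u v : V) : Prop := u = v ∨ H.Adj u v

lemma L1.mono {H H' : SimpleGraph V} {u v : V} (h : L1 H u v) (hle : H ≤ H') : L1 H' u v :=
  h.imp id fun hadj => hle hadj

lemma L1.symm2 {H : SimpleGraph V} {u v : V} (h : L1 H u v) : L1 H v u :=
  h.imp Eq.symm SimpleGraph.Adj.symm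

lemma L1.refl2 (H : SimpleGraph V) (u : V) : L1 H u u := Or.inl rfl

lemma exists_walk_L1 {H : SimpleGraph V} {u v : V} (h : L1 H u v) :
    ∃ p : H.Walk u v, p.length ≤ 1 := by
  rcases h with rfl | h
  · exact ⟨SimpleGraph.Walk.nil, by simp⟩
  · exact ⟨SimpleGraph.Walk.cons h SimpleGraph.Walk.nil, by simp⟩

lemma dist_le_three' {H : SimpleGraph V} {u v a b : V}
    (h1 : L1 H u a) (h2 : L1 H a b) (h3 : L1 H b v) : H.dist u v ≤ 3 := by
  obtain ⟨p1, hp1⟩ := exists_walk_L1 h1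
  obtain ⟨p2, hp2⟩ := exists_walk_L1 h2
  obtain ⟨p3, hp3⟩ := exists_walk_L1 h3
  have hd := SimpleGraph.dist_le ((p1.append p2).append p3)
  simp only [SimpleGraph.Walk.length_append] at hd
  omega

lemma add_adj {H : SimpleGraph V} {x y a b : V}
    (h : (H ⊔ fromEdgeSet {s(x, y)}).Adj a b) :
    H.Adj a b ∨ (a = x ∧ b = y) ∨ (a = y ∧ b = x) := by
  rw [SimpleGraph.sup_adj] at h
  rcases h with h | h
  · exact Or.inl h
  · rw [SimpleGraph.fromEdgeSet_adj] at h
    rcases h with ⟨hm, _⟩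
    rw [Set.mem_singleton_iff, Sym2.eq_iff] at hm
    exact Or.inr hm

lemma cliqueFree_add {H : SimpleGraph V} (hcf : H.CliqueFree 3) {x y : V}
    (hxy : x ≠ y) (hno : ∀ w, ¬(H.Adj x w ∧ H.Adj y w)) :
    (H ⊔ fromEdgeSet {s(x, y)}).CliqueFree 3 := by
  intro t ht
  rw [SimpleGraph.is3Clique_iff] at ht
  obtain ⟨a, b, c, hab, hac, hbc, rfl⟩ := ht
  have hne_bc : b ≠ c := hbc.ne
  have hne_ac : a ≠ c := hac.ne
  have hne_ab : a ≠ b := hab.ne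
  rcases add_adj hab with hab' | hab'
  · rcases add_adj hac with hac' | hac'
    · rcases add_adj hbc with hbc' | hbc'
      · exact hcf {a, b, c} (SimpleGraph.is3Clique_triple_iff.mpr ⟨hab', hac', hbc'⟩)
      · -- only bc is the new edge
        rcases hbc' with ⟨rfl, rfl⟩ | ⟨rfl, rfl⟩
        · exact hno a ⟨hab'.symm, hac'.symm⟩
        · exact hno a ⟨hac'.symm, hab'.symm⟩
    · rcases add_adj hbc with hbc' | hbc'
      · -- only ac is the new edge
        rcases hac' with ⟨rfl, rfl⟩ | ⟨rfl, rfl⟩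
        · exact hno b ⟨hab', hbc'.symm⟩
        · exact hno b ⟨hbc'.symm, hab'⟩
      · -- ac and bc new
        rcases hac' with ⟨rfl, rfl⟩ | ⟨rfl, rfl⟩ <;>
          rcases hbc' with ⟨h1, h2⟩ | ⟨h1, h2⟩ <;>
          first
          | exact hxy h1 | exact hxy h1.symm | exact hxy h2 | exact hxy h2.symm
          | exact hne_ab h1 | exact hne_ab h1.symm | exact hne_ab h2 | exact hne_ab h2.symm
          | exact hne_ac h1 | exact hne_ac h1.symm | exact hne_ac h2 | exact hne_ac h2.symm
          | exact hne_bc h1 | exact hne_bc h1.symm | exact hne_bc h2 | exact hne_bc h2.symm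
  · rcases hab' with ⟨rfl, rfl⟩ | ⟨rfl, rfl⟩
    · rcases add_adj hac with hac' | hac'
      · rcases add_adj hbc with hbc' | hbc'
        · -- only ab new
          exact hno c ⟨hac', hbc'⟩
        · rcases hbc' with ⟨h1, h2⟩ | ⟨h1, h2⟩ <;>
            first
          | exact hxy h1 | exact hxy h1.symm | exact hxy h2 | exact hxy h2.symm
          | exact hne_ab h1 | exact hne_ab h1.symm | exact hne_ab h2 | exact hne_ab h2.symm
          | exact hne_ac h1 | exact hne_ac h1.symm | exact hne_ac h2 | exact hne_ac h2.symm
          | exact hne_bc h1 | exact hne_bc h1.symm | exact hne_bc h2 | exact hne_bc h2.symm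
      · rcases hac' with ⟨h1, h2⟩ | ⟨h1, h2⟩ <;>
          first
          | exact hxy h1 | exact hxy h1.symm | exact hxy h2 | exact hxy h2.symm
          | exact hne_ab h1 | exact hne_ab h1.symm | exact hne_ab h2 | exact hne_ab h2.symm
          | exact hne_ac h1 | exact hne_ac h1.symm | exact hne_ac h2 | exact hne_ac h2.symm
          | exact hne_bc h1 | exact hne_bc h1.symm | exact hne_bc h2 | exact hne_bc h2.symm
    · rcases add_adj hac with hac' | hac'
      · rcases add_adj hbc with hbc' | hbc'
        · exact hno c ⟨hbc', hac'⟩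
        · rcases hbc' with ⟨h1, h2⟩ | ⟨h1, h2⟩ <;>
            first
          | exact hxy h1 | exact hxy h1.symm | exact hxy h2 | exact hxy h2.symm
          | exact hne_ab h1 | exact hne_ab h1.symm | exact hne_ab h2 | exact hne_ab h2.symm
          | exact hne_ac h1 | exact hne_ac h1.symm | exact hne_ac h2 | exact hne_ac h2.symm
          | exact hne_bc h1 | exact hne_bc h1.symm | exact hne_bc h2 | exact hne_bc h2.symm
      · rcases hac' with ⟨h1, h2⟩ | ⟨h1, h2⟩ <;>
          first
          | exact hxy h1 | exact hxy h1.symm | exact hxy h2 | exact hxy h2.symm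
          | exact hne_ab h1 | exact hne_ab h1.symm | exact hne_ab h2 | exact hne_ab h2.symm
          | exact hne_ac h1 | exact hne_ac h1.symm | exact hne_ac h2 | exact hne_ac h2.symm
          | exact hne_bc h1 | exact hne_bc h1.symm | exact hne_bc h2 | exact hne_bc h2.symm

/-- Greedy star construction: attach all attachable vertices of `C` to the hub `h`,
keeping triangle-freeness; afterwards every vertex of `C` (other than `h`) is within
distance 2 of `h`, and all new edges go from `h` to distinct vertices of `C` that are
newly adjacent to `h`. -/
lemma star (h : V) : ∀ (C : Finset V) (H : SimpleGraph V), H.CliqueFree 3 →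
    ∃ H' : SimpleGraph V, H ≤ H' ∧ H'.CliqueFree 3 ∧
      (H'.edgeSet \ H.edgeSet ⊆
        (fun v => s(h, v)) '' {v : V | v ∈ C ∧ H'.Adj h v ∧ ¬H.Adj h v}) ∧
      (∀ v ∈ C, v ≠ h → ∃ a, L1 H' v a ∧ L1 H' a h) := by
  intro C
  induction C using Finset.induction_on with
  | empty =>
      intro H hcf
      exact ⟨H, le_rfl, hcf, by simp, by simp⟩
  | @insert a C₀ haC ih =>
      intro H hcf
      have cont : ∀ H₁ : SimpleGraph V, H ≤ H₁ → H₁.CliqueFree 3 →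
          (H₁.edgeSet \ H.edgeSet ⊆
            (fun v => s(h, v)) '' {v : V | v ∈ (insert a C₀ : Finset V) ∧ H₁.Adj h v ∧ ¬H.Adj h v}) →
          (a = h ∨ ∃ w, L1 H₁ a w ∧ L1 H₁ w h) →
          ∃ H' : SimpleGraph V, H ≤ H' ∧ H'.CliqueFree 3 ∧
            (H'.edgeSet \ H.edgeSet ⊆
              (fun v => s(h, v)) '' {v : V | v ∈ (insert a C₀ : Finset V) ∧ H'.Adj h v ∧ ¬H.Adj h v}) ∧
            (∀ v ∈ (insert a C₀ : Finset V), v ≠ h → ∃ w, L1 H' v w ∧ L1 H' w h) := by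
        intro H₁ hle₁ hcf₁ hnew hcha
        obtain ⟨H', hle', hcf', hE', hch'⟩ := ih H₁ hcf₁
        refine ⟨H', hle₁.trans hle', hcf', ?_, ?_⟩
        · intro e he
          by_cases he1 : e ∈ H₁.edgeSet
          · obtain ⟨v, ⟨hv1, hv2, hv3⟩, rfl⟩ := hnew ⟨he1, he.2⟩
            exact ⟨v, ⟨hv1, hle' hv2, hv3⟩, rfl⟩
          · obtain ⟨v, ⟨hv1, hv2, hv3⟩, rfl⟩ := hE' ⟨he.1, he1⟩
            exact ⟨v, ⟨Finset.mem_insert_of_mem hv1, hv2, fun hH => hv3 (hle₁ hH)⟩, rfl⟩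
        · intro v hv hvh
          rcases Finset.mem_insert.mp hv with rfl | hv0
          · rcases hcha with rfl | ⟨w, hw1, hw2⟩
            · exact absurd rfl hvh
            · exact ⟨w, hw1.mono hle', hw2.mono hle'⟩
          · exact hch' v hv0 hvh
      by_cases hah : a = h
      · exact cont H le_rfl hcf (by simp) (Or.inl hah)
      · by_cases hadj : H.Adj h a
        · exact cont H le_rfl hcf (by simp)
            (Or.inr ⟨a, L1.refl2 H a, Or.inr hadj.symm⟩)
        · by_cases hcom : ∃ w, H.Adj w a ∧ H.Adj w h
          · obtain ⟨w, hw1, hw2⟩ := hcom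
            exact cont H le_rfl hcf (by simp)
              (Or.inr ⟨w, Or.inr hw1.symm, Or.inr hw2⟩)
          · -- add the edge h-a
            push_neg at hcom
            have hno : ∀ w, ¬(H.Adj h w ∧ H.Adj a w) := by
              intro w ⟨h1, h2⟩
              exact hcom w h2.symm h1.symm
            have hha : h ≠ a := fun hh => hah hh.symm
            set H₁ := H ⊔ fromEdgeSet {s(h, a)} with hH₁
            have hle₁ : H ≤ H₁ := le_sup_left
            have hadj₁ : H₁.Adj h a := by
              rw [hH₁, SimpleGraph.sup_adj, SimpleGraph.fromEdgeSet_adj]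
              exact Or.inr ⟨rfl, hha⟩
            have hcf₁ : H₁.CliqueFree 3 := cliqueFree_add hcf hha hno
            refine cont H₁ hle₁ hcf₁ ?_ (Or.inr ⟨a, L1.refl2 H₁ a, Or.inr hadj₁.symm⟩)
            intro e he
            have hee : e ∈ H.edgeSet ∪ (fromEdgeSet {s(h, a)}).edgeSet := by
              rw [← SimpleGraph.edgeSet_sup]; exact he.1
            rcases hee with hee | hee
            · exact absurd hee he.2
            · rw [SimpleGraph.edgeSet_fromEdgeSet] at hee
              have : e = s(h, a) := hee.1
              subst this
              exact ⟨a, ⟨Finset.mem_insert_self a C₀, hadj₁, hadj⟩, rfl⟩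

/-- Main recursive lemma. `U` is the set of currently uncovered vertices. -/
lemma main : ∀ (k : ℕ) (U : Finset V) (H : SimpleGraph V), U.card ≤ k →
    H.CliqueFree 3 → (∀ v : V, ∃ w, H.Adj v w) →
    (∀ u v : V, u ∉ U → v ∉ U → ∃ a b, L1 H u a ∧ L1 H a b ∧ L1 H b v) →
    (∀ u : V, u ∉ U → ∃ g, H.Adj u g ∧ ∀ v ∈ U, ∃ a, L1 H v a ∧ L1 H a g) →
    ∃ H' : SimpleGraph V, H ≤ H' ∧ H'.CliqueFree 3 ∧
      (H'.edgeSet \ H.edgeSet).ncard ≤ U.card - 1 ∧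
      (∀ u v : V, ∃ a b, L1 H' u a ∧ L1 H' a b ∧ L1 H' b v) := by
  intro k
  induction k with
  | zero =>
      intro U H hUk hcf hnb h3 h4
      have hU : U = ∅ := Finset.card_eq_zero.mp (Nat.le_zero.mp hUk)
      subst hU
      exact ⟨H, le_rfl, hcf, by simp, fun u v => h3 u v (by simp) (by simp)⟩
  | succ k ih =>
      intro U H hUk hcf hnb h3 h4
      rcases Finset.eq_empty_or_nonempty U with rfl | ⟨p, hp⟩
      · exact ⟨H, le_rfl, hcf, by simp, fun u v => h3 u v (by simp) (by simp)⟩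
      obtain ⟨q, hpq⟩ := hnb p
      obtain ⟨H₁, hle₁, hcf₁, hE₁, hch₁⟩ := star p (U.erase p) H hcf
      obtain ⟨H₂, hle₂, hcf₂, hE₂, hch₂⟩ := star q (U.erase q) H₁ hcf₁
      classical
      set U' := U.filter (fun v => ¬H₂.Adj v p ∧ ¬H₂.Adj v q) with hU'def
      have hle02 : H ≤ H₂ := hle₁.trans hle₂
      have hpq2 : H₂.Adj p q := hle02 hpq
      have hpnotU' : p ∉ U' := fun hmem => ((Finset.mem_filter.mp hmem).2.2) hpq2
      have hqnotU' : q ∉ U' := fun hmem => ((Finset.mem_filter.mp hmem).2.1) hpq2.symm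
      have hU'subU : U' ⊆ U := Finset.filter_subset _ _
      have hU'erase : U' ⊆ U.erase p := fun v hv =>
        Finset.mem_erase.mpr ⟨fun h => hpnotU' (h ▸ hv), hU'subU hv⟩
      have hcov : ∀ v ∈ U, v ∉ U' → H₂.Adj v p ∨ H₂.Adj v q := by
        intro v hvU hv
        by_contra hc
        push_neg at hc
        exact hv (Finset.mem_filter.mpr ⟨hvU, hc.1, hc.2⟩)
      have h1U : 1 ≤ U.card := Finset.card_pos.mpr ⟨p, hp⟩
      have hcard : U'.card ≤ k := by
        have h1 : U'.card ≤ (U.erase p).card := Finset.card_le_card hU'erase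
        have h2 : (U.erase p).card = U.card - 1 := Finset.card_erase_of_mem hp
        omega
      have hnb2 : ∀ v : V, ∃ w, H₂.Adj v w := fun v => (hnb v).imp (fun _ hw => hle02 hw)
      have hhub : ∀ u ∈ U, u ∉ U' → ∃ g, H₂.Adj u g ∧ (g = p ∨ g = q) ∧
          ∀ v ∈ U', ∃ a, L1 H₂ v a ∧ L1 H₂ a g := by
        intro u huU huU'
        rcases hcov u huU huU' with hup | huq
        · refine ⟨p, hup, Or.inl rfl, ?_⟩
          intro v hv
          obtain ⟨a, ha1, ha2⟩ := hch₁ v (hU'erase hv) (Finset.mem_erase.mp (hU'erase hv)).1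
          exact ⟨a, ha1.mono hle₂, ha2.mono hle₂⟩
        · refine ⟨q, huq, Or.inr rfl, ?_⟩
          intro v hv
          have hvq : v ∈ U.erase q :=
            Finset.mem_erase.mpr ⟨fun h => hqnotU' (h ▸ hv), hU'subU hv⟩
          exact hch₂ v hvq (Finset.mem_erase.mp hvq).1
      have hL1hub : ∀ g g' : V, (g = p ∨ g = q) → (g' = p ∨ g' = q) → L1 H₂ g g' := by
        rintro g g' (rfl | rfl) (rfl | rfl)
        exacts [Or.inl rfl, Or.inr hpq2, Or.inr hpq2.symm, Or.inl rfl]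
      have h3' : ∀ u v : V, u ∉ U' → v ∉ U' →
          ∃ a b, L1 H₂ u a ∧ L1 H₂ a b ∧ L1 H₂ b v := by
        intro u v hu hv
        by_cases huU : u ∈ U <;> by_cases hvU : v ∈ U
        · obtain ⟨g, hug, hgpq, _⟩ := hhub u huU hu
          obtain ⟨g', hvg', hgpq', _⟩ := hhub v hvU hv
          exact ⟨g, g', Or.inr hug, hL1hub g g' hgpq hgpq', Or.inr hvg'.symm⟩
        · obtain ⟨g, hvg, hall⟩ := h4 v hvU
          obtain ⟨a, ha1, ha2⟩ := hall u huU
          exact ⟨a, g, ha1.mono hle02, ha2.mono hle02, Or.inr (hle02 hvg).symm⟩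
        · obtain ⟨g, hug, hall⟩ := h4 u huU
          obtain ⟨a, ha1, ha2⟩ := hall v hvU
          exact ⟨g, a, Or.inr (hle02 hug), (ha2.mono hle02).symm2, (ha1.mono hle02).symm2⟩
        · obtain ⟨a, b, hh1, hh2, hh3⟩ := h3 u v huU hvU
          exact ⟨a, b, hh1.mono hle02, hh2.mono hle02, hh3.mono hle02⟩
      have h4' : ∀ u : V, u ∉ U' → ∃ g, H₂.Adj u g ∧
          ∀ v ∈ U', ∃ a, L1 H₂ v a ∧ L1 H₂ a g := by
        intro u hu
        by_cases huU : u ∈ U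
        · obtain ⟨g, hg1, _, hg2⟩ := hhub u huU hu
          exact ⟨g, hg1, hg2⟩
        · obtain ⟨g, hg1, hg2⟩ := h4 u huU
          refine ⟨g, hle02 hg1, fun v hv => ?_⟩
          obtain ⟨a, ha1, ha2⟩ := hg2 v (hU'subU hv)
          exact ⟨a, ha1.mono hle02, ha2.mono hle02⟩
      obtain ⟨H₃, hle₃, hcf₃, hcnt₃, hch₃⟩ := ih U' H₂ hcard hcf₂ hnb2 h3' h4'
      refine ⟨H₃, hle02.trans hle₃, hcf₃, ?_, hch₃⟩
      -- Edge counting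
      set S₁ : Set V := {v : V | v ∈ U.erase p ∧ H₁.Adj p v ∧ ¬H.Adj p v} with hS₁def
      set S₂ : Set V := {v : V | v ∈ U.erase q ∧ H₂.Adj q v ∧ ¬H₁.Adj q v} with hS₂def
      have hsub : H₃.edgeSet \ H.edgeSet ⊆
          (H₁.edgeSet \ H.edgeSet) ∪ (H₂.edgeSet \ H₁.edgeSet) ∪
          (H₃.edgeSet \ H₂.edgeSet) := by
        intro e he
        by_cases h1 : e ∈ H₁.edgeSet
        · exact Or.inl (Or.inl ⟨h1, he.2⟩)
        · by_cases h2 : e ∈ H₂.edgeSet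
          · exact Or.inl (Or.inr ⟨h2, h1⟩)
          · exact Or.inr ⟨he.1, h2⟩
      have hc1 : (H₁.edgeSet \ H.edgeSet).ncard ≤ S₁.ncard :=
        le_trans (Set.ncard_le_ncard hE₁ (Set.toFinite _)) (Set.ncard_image_le (Set.toFinite _))
      have hc2 : (H₂.edgeSet \ H₁.edgeSet).ncard ≤ S₂.ncard :=
        le_trans (Set.ncard_le_ncard hE₂ (Set.toFinite _)) (Set.ncard_image_le (Set.toFinite _))
      have hd12 : Disjoint S₁ S₂ := by
        rw [Set.disjoint_left]
        rintro v ⟨_, hv2, _⟩ ⟨_, hw2, _⟩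
        exact hcf₂ {p, q, v} (SimpleGraph.is3Clique_triple_iff.mpr ⟨hpq2, hle₂ hv2, hw2⟩)
      have hd1U : Disjoint S₁ (↑U' : Set V) := by
        rw [Set.disjoint_left]
        rintro v ⟨_, hv2, _⟩ hvU'
        exact ((Finset.mem_filter.mp (Finset.mem_coe.mp hvU')).2.1) (hle₂ hv2).symm
      have hd2U : Disjoint S₂ (↑U' : Set V) := by
        rw [Set.disjoint_left]
        rintro v ⟨_, hv2, _⟩ hvU'
        exact ((Finset.mem_filter.mp (Finset.mem_coe.mp hvU')).2.2) hv2.symm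
      have hsubU : S₁ ∪ S₂ ∪ (↑U' : Set V) ⊆ (↑(U.erase p) : Set V) := by
        rintro v ((⟨hv, _, _⟩ | ⟨hv, hv2, hv3⟩) | hv)
        · exact hv
        · refine Finset.mem_coe.mpr (Finset.mem_erase.mpr ⟨?_, (Finset.mem_erase.mp hv).2⟩)
          rintro rfl
          exact hv3 (hle₁ hpq).symm
        · exact Finset.mem_coe.mpr (hU'erase (Finset.mem_coe.mp hv))
      have hcards : S₁.ncard + S₂.ncard + U'.card ≤ U.card - 1 := by
        have e2 : (S₁ ∪ S₂ ∪ (↑U' : Set V)).ncard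
            = S₁.ncard + S₂.ncard + (↑U' : Set V).ncard := by
          rw [Set.ncard_union_eq (Disjoint.union_left hd1U hd2U) (Set.toFinite _) (Set.toFinite _),
            Set.ncard_union_eq hd12 (Set.toFinite _) (Set.toFinite _)]
        have e1 : (S₁ ∪ S₂ ∪ (↑U' : Set V)).ncard ≤ (↑(U.erase p) : Set V).ncard :=
          Set.ncard_le_ncard hsubU (Set.toFinite _)
        rw [Set.ncard_coe_finset] at e1
        rw [Set.ncard_coe_finset] at e2
        have e3 : (U.erase p).card = U.card - 1 := Finset.card_erase_of_mem hp
        omega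
      have hfin : (H₃.edgeSet \ H.edgeSet).ncard ≤
          (H₁.edgeSet \ H.edgeSet).ncard + (H₂.edgeSet \ H₁.edgeSet).ncard +
          (H₃.edgeSet \ H₂.edgeSet).ncard := by
        refine le_trans (Set.ncard_le_ncard hsub (Set.toFinite _)) ?_
        refine le_trans (Set.ncard_union_le _ _) ?_
        exact Nat.add_le_add_right (Set.ncard_union_le _ _) _
      have hcnt₃' : (H₃.edgeSet \ H₂.edgeSet).ncard ≤ U'.card := le_trans hcnt₃ (Nat.sub_le _ _)
      omega

end DiamThreeAux

open DiamThreeAux in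
/-- Every connected triangle-free graph on `n` vertices can be made of diameter at
most 3 by adding at most `n - 1` edges while staying triangle-free. -/
theorem diameter_three_triangle_free (n : ℕ) (G : SimpleGraph (Fin n))
    (hconn : G.Connected) (htf : G.CliqueFree 3) :
    ∃ G' : SimpleGraph (Fin n), G ≤ G' ∧ G'.CliqueFree 3 ∧
      (G'.edgeSet \ G.edgeSet).ncard ≤ n - 1 ∧
      G'.Connected ∧ ∀ u v : Fin n, G'.dist u v ≤ 3 := by
  by_cases hn : n ≤ 1
  · refine ⟨G, le_rfl, htf, by simp, hconn, ?_⟩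
    intro u v
    have huv : u = v := by
      have h1 := u.isLt
      have h2 := v.isLt
      apply Fin.ext
      omega
    rw [huv, SimpleGraph.dist_self]
    omega
  · push_neg at hn
    have hnb : ∀ v : Fin n, ∃ w, G.Adj v w := by
      intro v
      obtain ⟨u, hu⟩ := Fintype.exists_ne_of_one_lt_card (by simpa using hn) v
      obtain ⟨w⟩ := hconn.preconnected v u
      cases w with
      | nil => exact absurd rfl hu
      | cons h _ => exact ⟨_, h⟩
    obtain ⟨H', hle, hcf, hcnt, hch⟩ :=
      main n Finset.univ G (by simp) htf hnb (by simp) (by simp)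
    refine ⟨H', hle, hcf, ?_, hconn.mono hle, ?_⟩
    · simpa using hcnt
    · intro u v
      obtain ⟨a, b, h1, h2, h3⟩ := hch u v
      exact dist_le_three' h1 h2 h3
end

section
/- For every set mapping f on a set S of size n (i.e., f assigns to each proper subset A ⊊ S an element f(A) ∉ A), if m ≤ log₂ n then there exists a subset T ⊂ S with |T| = m such that the union of f(X) over all subsets X ⊆ T is not all of S. Equivalently, H(n) > log₂ n. -/
/-!
For `m ≥ 1` take any `(m - 1)`-set `K`. Together with the images of its subsets it covers at most
`(m - 1) + 2 ^ (m - 1) < 2 ^ m ≤ n` points, so some `r` is missed by both. Then `T = K ∪ {r}`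
misses `r`: a subset of `T` either lies in `K`, whose images avoid `r`, or contains `r`, which
the set mapping avoids on it.
-/

open Finset

variable {α : Type*} [Fintype α] [DecidableEq α]

lemma exists_forall_subset_insert_ne (f : Finset α → α) (hf : ∀ A, A ≠ univ → f A ∉ A)
    {K : Finset α} (hK : 2 ^ #K + #K < Fintype.card α) :
    ∃ r ∉ K, insert r K ≠ univ ∧ ∀ X ⊆ insert r K, f X ≠ r := by
  have hcard : #(K ∪ K.powerset.image f) < #(univ : Finset α) :=
    calc #(K ∪ K.powerset.image f) ≤ #K + #(K.powerset.image f) := card_union_le _ _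
      _ ≤ #K + 2 ^ #K := by grw [card_image_le, card_powerset]
      _ < #(univ : Finset α) := by rw [card_univ]; omega
  obtain ⟨r, -, hr⟩ := exists_mem_notMem_of_card_lt_card hcard
  rw [mem_union, not_or] at hr
  obtain ⟨hrK, hrI⟩ := hr
  have hT : insert r K ≠ univ := by
    rw [← card_lt_iff_ne_univ, card_insert_of_notMem hrK]
    have := Nat.one_le_two_pow (n := #K)
    omega
  refine ⟨r, hrK, hT, fun X hX hXr => ?_⟩
  by_cases hrX : r ∈ X
  · exact hf X (fun hXu => hT (univ_subset_iff.1 (hXu ▸ hX))) (hXr ▸ hrX)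
  · rw [subset_insert_iff_of_notMem hrX] at hX
    exact hrI (mem_image.2 ⟨X, mem_powerset.2 hX, hXr⟩)

lemma two_pow_le_of_le_logb {n m : ℕ} (hn : 0 < n) (hm : (m : ℝ) ≤ Real.logb 2 n) :
    2 ^ m ≤ n := by
  rw [Real.le_logb_iff_rpow_le one_lt_two (by exact_mod_cast hn), Real.rpow_natCast] at hm
  exact_mod_cast hm

/-- For every set mapping `f` on an `n`-element set (`f A ∉ A` for every proper subset
`A`), if `m ≤ log₂ n` then there is a proper subset `T` of size `m` whose family of
subsets does not have all of `S` as the union of their images: `H(n) > log₂ n`. -/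
theorem set_mapping_lower_bound (n m : ℕ) (hn : 2 ≤ n)
    (f : Finset (Fin n) → Fin n) (hf : ∀ A, A ≠ Finset.univ → f A ∉ A)
    (hm : (m : ℝ) ≤ Real.logb 2 n) :
    ∃ T : Finset (Fin n), T ≠ Finset.univ ∧ T.card = m ∧
      ∃ s : Fin n, ∀ X ⊆ T, f X ≠ s := by
  have h2m : 2 ^ m ≤ n := two_pow_le_of_le_logb (by omega) hm
  cases m with
  | zero =>
    have : Nontrivial (Fin n) := Fin.nontrivial_iff_two_le.2 hn
    obtain ⟨s, hs⟩ := exists_ne (f ∅)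
    refine ⟨∅, (card_lt_iff_ne_univ _).1 (by rw [card_empty, Fintype.card_fin]; omega), rfl, s, ?_⟩
    exact fun X hX => subset_empty.1 hX ▸ hs.symm
  | succ k =>
    have hk : k < 2 ^ k := Nat.lt_two_pow_self
    obtain ⟨K, -, hK⟩ := exists_subset_card_eq (s := (univ : Finset (Fin n))) (n := k)
      (by rw [card_univ, Fintype.card_fin]; omega)
    obtain ⟨r, hrK, hT, hr⟩ := exists_forall_subset_insert_ne f hf (K := K)
      (by rw [hK, Fintype.card_fin]; omega)
    exact ⟨insert r K, hT, by rw [card_insert_of_notMem hrK, hK], r, hr⟩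
end

section
/- For every edge coloring of K_n in which every 4 vertices span at least 5 distinct colors, the number of colors used is at least 5(n-1)/6. Equivalently, f(n,4,5) ≥ 5(n-1)/6. -/
/-!
Call two edges `va`, `vb` of the same colour a cherry at `v`. If `K` colours are used, the
`n - 1` edges at a vertex fall into at most `K` colour classes, so (as `d (d - 1) ≥ 2 (d - 1)`)
every vertex carries at least `2 (n - 1 - K)` ordered cherries. On the other hand two different
cherries never share two vertices: together they would span at most four vertices, and the six
edges among these would carry at most `6 - 2` colours. Orienting each ordered cherry `(v, a, b)`
as the directed triangle `v → a → b → v` therefore uses every arc at most once, so there are at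
most `n (n - 1) / 3` ordered cherries. Hence `2 n (n - 1 - K) ≤ n (n - 1) / 3`, i.e.
`6 K ≥ 5 (n - 1)`.
-/

open Finset

namespace Finset

variable {α β : Type*} [DecidableEq β]

theorem card_image_add_two_le [DecidableEq α] {s : Finset α} {f : α → β} {x₁ x₂ y₁ y₂ : α}
    (hx₁ : x₁ ∈ s) (hx₂ : x₂ ∈ s) (hy₁ : y₁ ∈ s) (hy₂ : y₂ ∈ s)
    (hx : x₁ ≠ x₂) (hy : y₁ ≠ y₂) (hfx : f x₁ = f x₂) (hfy : f y₁ = f y₂)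
    (hxy : ({x₁, x₂} : Finset α) ≠ {y₁, y₂}) :
    #(s.image f) + 2 ≤ #s := by
  have himage : (s.erase x₂).image f = s.image f := by
    refine (image_subset_image (erase_subset _ _)).antisymm fun b hb => ?_
    obtain ⟨x, hx, rfl⟩ := mem_image.1 hb
    by_cases h : x = x₂
    · exact mem_image.2 ⟨x₁, mem_erase.2 ⟨‹_›, hx₁⟩, h ▸ hfx⟩
    · exact mem_image_of_mem f (mem_erase.2 ⟨h, hx⟩)
  obtain ⟨p, hp, q, hq, hpq, hfpq⟩ : ∃ p ∈ s.erase x₂, ∃ q ∈ s.erase x₂, p ≠ q ∧ f p = f q := by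
    by_cases h₁ : y₁ = x₂
    · subst h₁
      refine ⟨x₁, mem_erase.2 ⟨hx, hx₁⟩, y₂, mem_erase.2 ⟨hy.symm, hy₂⟩, ?_, hfx.trans hfy⟩
      rintro rfl
      exact hxy (pair_comm _ _)
    by_cases h₂ : y₂ = x₂
    · subst h₂
      refine ⟨x₁, mem_erase.2 ⟨hx, hx₁⟩, y₁, mem_erase.2 ⟨h₁, hy₁⟩, ?_, hfx.trans hfy.symm⟩
      rintro rfl
      exact hxy rfl
    exact ⟨y₁, mem_erase.2 ⟨h₁, hy₁⟩, y₂, mem_erase.2 ⟨h₂, hy₂⟩, hy, hfy⟩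
  have hlt : #((s.erase x₂).image f) < #(s.erase x₂) :=
    card_image_le.lt_of_ne fun h => hpq (card_image_iff.1 h hp hq hfpq)
  rw [card_erase_of_mem hx₂, himage] at hlt
  have := card_pos.2 ⟨x₂, hx₂⟩
  omega

theorem two_mul_card_le_card_filter_offDiag_add {s : Finset α} (f : α → β) :
    2 * #s ≤ #{p ∈ s.offDiag | f p.1 = f p.2} + 2 * #(s.image f) := by
  have hoff : #{p ∈ s.offDiag | f p.1 = f p.2}
      = ∑ b ∈ s.image f, #{a ∈ s | f a = b}.offDiag := by
    rw [card_eq_sum_card_fiberwise (f := fun p => f p.1) (t := s.image f)]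
    · refine sum_congr rfl fun b _ => congrArg card ?_
      ext ⟨x, y⟩
      simp only [mem_filter, mem_offDiag]
      grind
    · intro p hp
      exact mem_image_of_mem f (mem_offDiag.1 (mem_filter.1 hp).1).1
  rw [card_eq_sum_card_image f s, hoff, card_eq_sum_ones (s.image f), mul_sum, mul_sum,
    mul_one, ← sum_add_distrib]
  refine sum_le_sum fun b _ => ?_
  rw [offDiag_card]
  -- `2 d ≤ d (d - 1) + 2` is `(d - 1) (d - 2) ≥ 0`
  rcases Nat.lt_or_ge #{a ∈ s | f a = b} 3 with h | h
  · interval_cases #{a ∈ s | f a = b} <;> simp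
  · nlinarith [Nat.sub_add_cancel (Nat.le_mul_self #{a ∈ s | f a = b})]

end Finset

section Coloring

variable {V κ : Type*} [DecidableEq V] [DecidableEq κ]

def edgeColors (c : Sym2 V → κ) (s : Finset V) : Finset κ :=
  (s.offDiag.image Sym2.mk.uncurry).image c

theorem coe_edgeColors (c : Sym2 V → κ) (s : Finset V) :
    (edgeColors c s : Set κ) = {k | ∃ u ∈ s, ∃ v ∈ s, u ≠ v ∧ c s(u, v) = k} := by
  ext k
  simp [edgeColors, and_assoc]

def IsFourFiveColoring (c : Sym2 V → κ) : Prop :=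
  ∀ s : Finset V, #s = 4 → 5 ≤ #(edgeColors c s)

variable [Fintype V]

/-- `⟨v, (a, b)⟩` is an ordered cherry with apex `v`; each cherry is listed in both orders. -/
def cherries (c : Sym2 V → κ) : Finset (Σ _ : V, V × V) :=
  univ.sigma fun v => {p ∈ (univ.erase v).offDiag | c s(v, p.1) = c s(v, p.2)}

@[simp]
theorem mem_cherries {c : Sym2 V → κ} {v a b : V} :
    ⟨v, (a, b)⟩ ∈ cherries c ↔ a ≠ v ∧ b ≠ v ∧ a ≠ b ∧ c s(v, a) = c s(v, b) := by
  simp [cherries, and_assoc]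

theorem two_mul_card_mul_le_card_cherries_add (c : Sym2 V → κ) :
    2 * (Fintype.card V * (Fintype.card V - 1))
      ≤ #(cherries c) + 2 * (Fintype.card V * #(edgeColors c univ)) := by
  have hvertex : ∀ v : V, 2 * (Fintype.card V - 1) ≤
      #{p ∈ (univ.erase v).offDiag | c s(v, p.1) = c s(v, p.2)} + 2 * #(edgeColors c univ) := by
    intro v
    have hsub : (univ.erase v).image (fun u => c s(v, u)) ⊆ edgeColors c univ := by
      intro k hk
      obtain ⟨u, hu, rfl⟩ := mem_image.1 hk
      exact mem_image_of_mem c (mem_image_of_mem _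
        (mem_offDiag.2 ⟨mem_univ v, mem_univ u, (ne_of_mem_erase hu).symm⟩))
    have := two_mul_card_le_card_filter_offDiag_add (s := univ.erase v) (fun u => c s(v, u))
    rw [card_erase_of_mem (mem_univ v), card_univ] at this
    have := card_le_card hsub
    omega
  calc 2 * (Fintype.card V * (Fintype.card V - 1)) = ∑ v : V, 2 * (Fintype.card V - 1) := by
        simp [mul_left_comm]
    _ ≤ _ := sum_le_sum fun v _ => hvertex v
    _ = _ := by simp [sum_add_distrib, cherries, card_sigma, mul_left_comm]

theorem IsFourFiveColoring.cherry_eq_of_two_le_card_inter {c : Sym2 V → κ}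
    (hc : IsFourFiveColoring c) (hV : 4 ≤ Fintype.card V) {v a b v' a' b' : V}
    (h : ⟨v, (a, b)⟩ ∈ cherries c) (h' : ⟨v', (a', b')⟩ ∈ cherries c)
    (hshare : 2 ≤ #({v, a, b} ∩ {v', a', b'} : Finset V)) :
    v' = v ∧ (a' = a ∧ b' = b ∨ a' = b ∧ b' = a) := by
  rw [mem_cherries] at h h'
  obtain ⟨hav, hbv, hab, hcol⟩ := h
  obtain ⟨hav', hbv', hab', hcol'⟩ := h'
  have hT : #({v, a, b} ∪ {v', a', b'} : Finset V) ≤ 4 := by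
    have := card_union_add_card_inter ({v, a, b} : Finset V) {v', a', b'}
    have := card_le_three (a := v) (b := a) (c := b)
    have := card_le_three (a := v') (b := a') (c := b')
    omega
  obtain ⟨S, hTS, hS⟩ := exists_superset_card_eq hT hV
  have hedge : ∀ x ∈ ({v, a, b} ∪ {v', a', b'} : Finset V),
      ∀ y ∈ ({v, a, b} ∪ {v', a', b'} : Finset V),
      x ≠ y → s(x, y) ∈ S.offDiag.image Sym2.mk.uncurry :=
    fun x hx y hy hxy => mem_image_of_mem _ (mem_offDiag.2 ⟨hTS hx, hTS hy, hxy⟩)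
  -- two different monochromatic pairs of edges inside `S` would leave at most `6 - 2` colours
  have hpair : ({s(v, a), s(v, b)} : Finset (Sym2 V)) = {s(v', a'), s(v', b')} := by
    by_contra hne
    have hsmall := card_image_add_two_le (f := c)
      (hedge v (by simp) a (by simp) hav.symm) (hedge v (by simp) b (by simp) hbv.symm)
      (hedge v' (by simp) a' (by simp) hav'.symm) (hedge v' (by simp) b' (by simp) hbv'.symm)
      (by simp [hab, hav]) (by simp [hab', hav']) hcol hcol' hne
    rw [Sym2.card_image_offDiag, hS] at hsmall
    have := hc S hS
    rw [edgeColors] at this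
    have : Nat.choose 4 2 = 6 := rfl
    omega
  have h₁ : s(v, a) ∈ ({s(v', a'), s(v', b')} : Finset (Sym2 V)) := hpair ▸ by simp
  have h₂ : s(v, b) ∈ ({s(v', a'), s(v', b')} : Finset (Sym2 V)) := hpair ▸ by simp
  simp only [mem_insert, mem_singleton, Sym2.eq_iff] at h₁ h₂
  grind

/-- The two orders of a cherry together give the six ordered pairs of its triangle. -/
def cherryArc (x : Σ _ : V, V × V) : Fin 3 → V × V :=
  ![(x.1, x.2.1), (x.2.1, x.2.2), (x.2.2, x.1)]

theorem cherryArc_mem_offDiag {c : Sym2 V → κ} {v a b : V} (h : ⟨v, (a, b)⟩ ∈ cherries c)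
    (i : Fin 3) : cherryArc ⟨v, (a, b)⟩ i ∈ ({v, a, b} : Finset V).offDiag := by
  rw [mem_cherries] at h
  fin_cases i <;>
    simp only [cherryArc, Fin.zero_eta, Fin.mk_one, Fin.reduceFinMk, Fin.isValue,
      Matrix.cons_val_zero, Matrix.cons_val_one, Matrix.cons_val, mem_offDiag, mem_insert,
      mem_singleton] <;>
    grind

theorem IsFourFiveColoring.three_mul_card_cherries_le {c : Sym2 V → κ}
    (hc : IsFourFiveColoring c) (hV : 4 ≤ Fintype.card V) :
    3 * #(cherries c) ≤ Fintype.card V * (Fintype.card V - 1) := by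
  have hinj : #(cherries c ×ˢ (univ : Finset (Fin 3))) ≤ #(univ : Finset V).offDiag := by
    refine card_le_card_of_injOn (fun q => cherryArc q.1 q.2) ?_ ?_
    · rintro ⟨⟨v, a, b⟩, i⟩ hq
      simp only [coe_product, Set.mem_prod, mem_coe] at hq
      exact mem_offDiag.2
        ⟨mem_univ _, mem_univ _, (mem_offDiag.1 (cherryArc_mem_offDiag hq.1 i)).2.2⟩
    · rintro ⟨⟨v, a, b⟩, i⟩ hx ⟨⟨v', a', b'⟩, j⟩ hx' hij
      simp only [coe_product, Set.mem_prod, mem_coe, mem_univ, and_true] at hx hx' hij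
      have hshare : 2 ≤ #({v, a, b} ∩ {v', a', b'} : Finset V) := by
        obtain ⟨hp, hq, hpq⟩ := mem_offDiag.1 (cherryArc_mem_offDiag hx i)
        obtain ⟨hp', hq', -⟩ := mem_offDiag.1 (cherryArc_mem_offDiag hx' j)
        rw [← hij] at hp' hq'
        rw [← card_pair hpq]
        exact card_le_card (insert_subset (mem_inter.2 ⟨hp, hp'⟩)
          (singleton_subset_iff.2 (mem_inter.2 ⟨hq, hq'⟩)))
      have hcherry := mem_cherries.1 hx
      obtain ⟨rfl, ⟨rfl, rfl⟩ | ⟨rfl, rfl⟩⟩ :=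
          hc.cherry_eq_of_two_le_card_inter hV hx hx' hshare <;>
        fin_cases i <;> fin_cases j <;>
        simp only [cherryArc, Fin.zero_eta, Fin.mk_one, Fin.reduceFinMk, Fin.isValue,
          Matrix.cons_val_zero, Matrix.cons_val_one, Matrix.cons_val, Prod.mk.injEq,
          Sigma.mk.injEq, heq_eq_eq] at hij ⊢ <;>
        grind
  rw [card_product, card_univ, Fintype.card_fin, offDiag_card, card_univ] at hinj
  rw [Nat.mul_sub_one]
  linarith

end Coloring

/-- In every edge coloring of `K_n` (`n ≥ 4`) in which every 4 vertices span at least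
5 distinct colors, the number of colors used is at least `5(n-1)/6`:
`f(n,4,5) ≥ 5(n-1)/6`. -/
theorem f_4_5_lower_bound (n : ℕ) (hn : 4 ≤ n) (c : Sym2 (Fin n) → ℕ)
    (hc : ∀ s : Finset (Fin n), s.card = 4 →
      5 ≤ {k : ℕ | ∃ u ∈ s, ∃ v ∈ s, u ≠ v ∧ c s(u, v) = k}.ncard) :
    5 * (n - 1) ≤ 6 * {k : ℕ | ∃ u v : Fin n, u ≠ v ∧ c s(u, v) = k}.ncard := by
  have hcol : IsFourFiveColoring c := fun s hs => by
    simpa only [← coe_edgeColors, Set.ncard_coe_finset] using hc s hs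
  have hcolors : {k : ℕ | ∃ u v : Fin n, u ≠ v ∧ c s(u, v) = k} = edgeColors c univ := by
    simp [coe_edgeColors]
  have hlow := two_mul_card_mul_le_card_cherries_add c
  have hup := hcol.three_mul_card_cherries_le (by simpa using hn)
  rw [Fintype.card_fin] at hlow hup
  rw [hcolors, Set.ncard_coe_finset]
  have : 5 * (n - 1) * n ≤ 6 * #(edgeColors c univ) * n := by nlinarith
  exact Nat.le_of_mul_le_mul_right this (by omega)
end

section
/- In every 2-coloring of the edges of K_n there is a Hamiltonian path that is the concatenation of a red path and a blue path (i.e., the vertex set can be partitioned into the vertex sets of a red path and a blue path that share no vertices, where empty or single-vertex paths are allowed). -/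
/-!
Induct on the vertex set. Suppose a red path from `u` to `v` followed by a blue path from `v` to
`w` covers `S`, and `a ∉ S`. If `au` is red or `aw` is blue, attach `a` at that end. Otherwise `au`
is blue and `aw` is red. If the red part is trivial, `a u` starts a longer blue path, and
symmetrically if the blue part is trivial. Otherwise, if `wu` is red then `a w u … v` is red and
the blue path only loses its last vertex `w`; if `wu` is blue, the mirror image of this works.
-/

open SimpleGraph Walk

variable {V κ : Type*}

structure RedBluePath (c : Sym2 V → κ) (r b : κ) (u v w : V) where
  red : (⊤ : SimpleGraph V).Walk u v
  blue : (⊤ : SimpleGraph V).Walk v w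
  red_color : ∀ e ∈ red.edges, c e = r
  blue_color : ∀ e ∈ blue.edges, c e = b
  isPath : (red.append blue).IsPath

namespace RedBluePath

variable {c : Sym2 V → κ} {r b : κ} {u v w a : V}

def reverse (P : RedBluePath c r b u v w) : RedBluePath c b r w v u where
  red := P.blue.reverse
  blue := P.red.reverse
  red_color e he := P.blue_color e (by simpa using he)
  blue_color e he := P.red_color e (by simpa using he)
  isPath := by rw [← reverse_append]; exact P.isPath.reverse

variable [DecidableEq V]

def support (P : RedBluePath c r b u v w) : Finset V :=
  (P.red.append P.blue).support.toFinset

@[simp]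
theorem support_reverse (P : RedBluePath c r b u v w) : P.reverse.support = P.support := by
  simp only [support, reverse, ← Walk.reverse_append, Walk.support_reverse, List.toFinset_reverse]

end RedBluePath

def HasRedBluePathOn [DecidableEq V] (c : Sym2 V → κ) (r b : κ) (S : Finset V) : Prop :=
  ∃ (u v w : V) (P : RedBluePath c r b u v w), P.support = S

variable [DecidableEq V] {c : Sym2 V → κ} {r b : κ} {S : Finset V}

theorem HasRedBluePathOn.symm (h : HasRedBluePathOn c r b S) : HasRedBluePathOn c b r S := by
  obtain ⟨u, v, w, P, rfl⟩ := h
  exact ⟨w, v, u, P.reverse, P.support_reverse⟩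

theorem hasRedBluePathOn_singleton (a : V) : HasRedBluePathOn c r b {a} :=
  ⟨a, a, a, ⟨nil, nil, by simp, by simp, by simp⟩, rfl⟩

namespace RedBluePath

variable {u v w a : V}

theorem insert_of_perm (P : RedBluePath c r b u v w) (ha : a ∉ P.support) {u' v' w' : V}
    (p : (⊤ : SimpleGraph V).Walk u' v') (q : (⊤ : SimpleGraph V).Walk v' w')
    (hp : ∀ e ∈ p.edges, c e = r) (hq : ∀ e ∈ q.edges, c e = b)
    (hperm : (p.append q).support.Perm (a :: (P.red.append P.blue).support)) :
    HasRedBluePathOn c r b (insert a P.support) := by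
  have hnodup : (a :: (P.red.append P.blue).support).Nodup :=
    List.nodup_cons.mpr ⟨fun h => ha (List.mem_toFinset.mpr h), P.isPath.support_nodup⟩
  refine ⟨u', v', w', ⟨p, q, hp, hq, (isPath_def _).mpr (hperm.nodup_iff.mpr hnodup)⟩, ?_⟩
  rw [RedBluePath.support, List.toFinset_eq_of_perm _ _ hperm, List.toFinset_cons]
  rfl

theorem insert_cons_red (P : RedBluePath c r b u v w) (ha : a ∉ P.support)
    (hau : c s(a, u) = r) : HasRedBluePathOn c r b (insert a P.support) := by
  have hne_au : a ≠ u := by rintro rfl; exact ha (by simp [support])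
  refine P.insert_of_perm ha (cons hne_au P.red) P.blue ?_ P.blue_color (by simp)
  simpa [hau] using P.red_color

theorem insert_cons_blue (P : RedBluePath c r b v v w) (ha : a ∉ P.support)
    (hav : c s(a, v) = b) : HasRedBluePathOn c r b (insert a P.support) := by
  have hne_av : a ≠ v := by rintro rfl; exact ha (by simp [support])
  have hred : P.red = nil := (isPath_iff_nil.mp P.isPath.of_append_left).eq_nil
  refine P.insert_of_perm ha nil (cons hne_av P.blue) (by simp) ?_ (by simp [hred])
  simpa [hav] using P.blue_color

theorem insert_of_chord (P : RedBluePath c r b u v w) (ha : a ∉ P.support) (hvw : v ≠ w)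
    (haw : c s(a, w) = r) (hwu : c s(w, u) = r) :
    HasRedBluePathOn c r b (insert a P.support) := by
  have hnil : ¬ P.blue.Nil := not_nil_of_ne hvw
  have hne_aw : a ≠ w := by rintro rfl; exact ha (by simp [support])
  have hne_uw : u ≠ w := by
    rintro rfl; exact hnil (nil_append_iff.mp (isPath_iff_nil.mp P.isPath)).2
  refine P.insert_of_perm ha (cons hne_aw (cons hne_uw.symm P.red)) P.blue.dropLast ?_ ?_ ?_
  · simpa [haw, hwu] using P.red_color
  · simp only [edges_dropLast]
    exact fun e he => P.blue_color e (List.mem_of_mem_dropLast he)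
  · rw [cons_append, cons_append, support_cons, support_cons,
      support_append_eq_support_dropLast_append, support_append_eq_support_dropLast_append,
      ← support_dropLast_concat hnil, ← List.append_assoc]
    exact ((List.perm_append_singleton _ _).symm).cons a

theorem insert (P : RedBluePath c r b u v w) (ha : a ∉ P.support)
    (hc : ∀ e, c e = r ∨ c e = b) : HasRedBluePathOn c r b (insert a P.support) := by
  rcases hc s(a, u) with hau | hau
  · exact P.insert_cons_red ha hau
  rcases (hc s(a, w)).symm with haw | haw
  · simpa using (P.reverse.insert_cons_red (by simpa using ha) haw).symm
  obtain rfl | huv := eq_or_ne u v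
  · exact P.insert_cons_blue ha hau
  obtain rfl | hvw := eq_or_ne v w
  · simpa using (P.reverse.insert_cons_blue (by simpa using ha) haw).symm
  rcases hc s(w, u) with hwu | hwu
  · exact P.insert_of_chord ha hvw haw hwu
  · rw [Sym2.eq_swap] at hwu
    simpa using (P.reverse.insert_of_chord (by simpa using ha) huv.symm hau hwu).symm

end RedBluePath

theorem HasRedBluePathOn.insert {a : V} (h : HasRedBluePathOn c r b S) (ha : a ∉ S)
    (hc : ∀ e, c e = r ∨ c e = b) : HasRedBluePathOn c r b (insert a S) := by
  obtain ⟨u, v, w, P, rfl⟩ := h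
  exact P.insert ha hc

theorem hasRedBluePathOn_of_nonempty (hc : ∀ e, c e = r ∨ c e = b) (hS : S.Nonempty) :
    HasRedBluePathOn c r b S := by
  induction hS using Finset.Nonempty.cons_induction with
  | singleton a => exact hasRedBluePathOn_singleton a
  | cons a S ha _ ih => simpa only [Finset.cons_eq_insert] using ih.insert ha hc

/-- In every 2-coloring of the edges of `K_n` (`n ≥ 1`) there is a Hamiltonian path
which is the concatenation of a red path and a blue path (either of which may be
trivial). -/
theorem hamiltonian_path_red_blue (n : ℕ) (hn : 0 < n)
    (c : Sym2 (Fin n) → Fin 2) :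
    ∃ (u v w : Fin n) (p : (⊤ : SimpleGraph (Fin n)).Walk u v)
      (q : (⊤ : SimpleGraph (Fin n)).Walk v w),
      (∀ e ∈ p.edges, c e = 0) ∧ (∀ e ∈ q.edges, c e = 1) ∧
      (p.append q).IsPath ∧ ∀ x : Fin n, x ∈ (p.append q).support := by
  have hc : ∀ e, c e = 0 ∨ c e = 1 := fun e => by omega
  obtain ⟨u, v, w, P, hP⟩ :=
    hasRedBluePathOn_of_nonempty hc (Finset.univ_nonempty_iff.mpr ⟨⟨0, hn⟩⟩)
  refine ⟨u, v, w, P.red, P.blue, P.red_color, P.blue_color, P.isPath, fun x => ?_⟩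
  simpa [RedBluePath.support] using hP.ge (Finset.mem_univ x)
end

section
/- Every K_{k+1}-saturated graph G on n vertices (n ≥ k+1) has at least (k-1)(n-k+1) + binom(k-1,2) edges; that is, the minimum number of edges of a graph on n vertices that contains no K_{k+1} but such that adding any missing edge creates a K_{k+1} is (k-1)(n-k+1) + binom(k-1,2). -/
/-- `G` is `K_{k+1}`-saturated: it has no clique of size `k+1`, but adding any
missing edge creates one. -/
def IsCliqueSaturated {V : Type*} (G : SimpleGraph V) (k : ℕ) : Prop :=
  G.CliqueFree (k + 1) ∧ ∀ u v : V, u ≠ v → ¬ G.Adj u v →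
    ¬ (G ⊔ SimpleGraph.fromEdgeSet {s(u, v)}).CliqueFree (k + 1)


open Finset Equiv

variable {α : Type*} [Fintype α] [DecidableEq α] [LinearOrder α]

/-- The set of permutations putting every element of `A` before every element of `B`. -/
def Ev (A B : Finset α) : Finset (Equiv.Perm α) :=
  Finset.univ.filter (fun σ => ∀ a ∈ A, ∀ b ∈ B, σ a < σ b)

lemma mem_Ev {A B : Finset α} {σ : Equiv.Perm α} :
    σ ∈ Ev A B ↔ ∀ a ∈ A, ∀ b ∈ B, σ a < σ b := by
  simp [Ev]

example (S : Finset α) (σ : Equiv.Perm α): True := trivial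

lemma ev_exists_unique (S : Finset α) (h2 : 2 ≤ S.card) (σ : Equiv.Perm α) :
    ∃ X, (X ∈ S.powersetCard 2 ∧ σ ∈ Ev X (S \ X)) ∧
      ∀ Y, Y ∈ S.powersetCard 2 → σ ∈ Ev Y (S \ Y) → Y = X := by
  have hSne : S.Nonempty := Finset.card_pos.mp (by omega)
  have hPne : (S.image σ).Nonempty := hSne.image σ
  set m1 := (S.image σ).min' hPne with hm1
  have hm1mem : m1 ∈ S.image σ := Finset.min'_mem _ _
  have hcardim : (S.image σ).card = S.card := Finset.card_image_of_injective _ σ.injective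
  have hP'ne : ((S.image σ).erase m1).Nonempty := by
    rw [← Finset.card_pos, Finset.card_erase_of_mem hm1mem]; omega
  set m2 := ((S.image σ).erase m1).min' hP'ne with hm2
  have hm2mem' : m2 ∈ (S.image σ).erase m1 := Finset.min'_mem _ _
  have hm2mem : m2 ∈ S.image σ := Finset.mem_of_mem_erase hm2mem'
  have hm2ne : m2 ≠ m1 := Finset.ne_of_mem_erase hm2mem'
  set a1 := σ.symm m1 with ha1
  set a2 := σ.symm m2 with ha2
  have hσa1 : σ a1 = m1 := σ.apply_symm_apply m1
  have hσa2 : σ a2 = m2 := σ.apply_symm_apply m2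
  have ha1S : a1 ∈ S := by
    obtain ⟨x, hx, hxe⟩ := Finset.mem_image.mp hm1mem
    rwa [ha1, ← hxe, σ.symm_apply_apply]
  have ha2S : a2 ∈ S := by
    obtain ⟨x, hx, hxe⟩ := Finset.mem_image.mp hm2mem
    rwa [ha2, ← hxe, σ.symm_apply_apply]
  have hane : a1 ≠ a2 := fun h => hm2ne (by rw [← hσa2, ← h, hσa1])
  refine ⟨{a1, a2}, ⟨?_, ?_⟩, ?_⟩
  · rw [Finset.mem_powersetCard]
    constructor
    · intro x hx
      rcases Finset.mem_insert.mp hx with h | h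
      · exact h ▸ ha1S
      · exact (Finset.mem_singleton.mp h) ▸ ha2S
    · rw [Finset.card_insert_of_notMem (by simpa using hane), Finset.card_singleton]
  · rw [mem_Ev]
    intro a ha b hb
    obtain ⟨hbS, hbX⟩ := Finset.mem_sdiff.mp hb
    have hba1 : b ≠ a1 := fun h => hbX (by simp [h])
    have hba2 : b ≠ a2 := fun h => hbX (by simp [h])
    have hσbmem : σ b ∈ S.image σ := Finset.mem_image_of_mem _ hbS
    have hσb1 : σ b ≠ m1 := fun h => hba1 (by rw [ha1, ← h, σ.symm_apply_apply])
    have hσb2 : σ b ≠ m2 := fun h => hba2 (by rw [ha2, ← h, σ.symm_apply_apply])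
    rcases Finset.mem_insert.mp ha with h | h
    · rw [h, hσa1]
      exact lt_of_le_of_ne (Finset.min'_le _ _ hσbmem) (Ne.symm hσb1)
    · rw [Finset.mem_singleton.mp h, hσa2]
      exact lt_of_le_of_ne
        (Finset.min'_le _ _ (Finset.mem_erase.mpr ⟨hσb1, hσbmem⟩)) (Ne.symm hσb2)
  · intro Y hY hσY
    obtain ⟨hYS, hYcard⟩ := Finset.mem_powersetCard.mp hY
    rw [mem_Ev] at hσY
    have ha1Y : a1 ∈ Y := by
      by_contra h
      obtain ⟨y, hy⟩ := Finset.card_pos.mp (by omega : 0 < Y.card)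
      have := hσY y hy a1 (Finset.mem_sdiff.mpr ⟨ha1S, h⟩)
      rw [hσa1] at this
      exact absurd (Finset.min'_le _ _ (Finset.mem_image_of_mem _ (hYS hy)))
        (not_le_of_gt this)
    have ha2Y : a2 ∈ Y := by
      by_contra h
      have : (Y.erase a1).Nonempty := by
        rw [← Finset.card_pos, Finset.card_erase_of_mem ha1Y]; omega
      obtain ⟨y, hy⟩ := this
      have hyY := Finset.mem_of_mem_erase hy
      have hyne : y ≠ a1 := Finset.ne_of_mem_erase hy
      have hσy : σ y ∈ (S.image σ).erase m1 := by
        refine Finset.mem_erase.mpr ⟨?_, Finset.mem_image_of_mem _ (hYS hyY)⟩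
        exact fun hc => hyne (by rw [ha1, ← hc, σ.symm_apply_apply])
      have := hσY y hyY a2 (Finset.mem_sdiff.mpr ⟨ha2S, h⟩)
      rw [hσa2] at this
      exact absurd (Finset.min'_le _ _ hσy) (not_le_of_gt this)
    have hXcard : ({a1, a2} : Finset α).card = 2 := by
      rw [Finset.card_insert_of_notMem (by simpa using hane), Finset.card_singleton]
    refine (Finset.eq_of_subset_of_card_le ?_ (by omega)).symm
    intro x hx
    rcases Finset.mem_insert.mp hx with h | h
    · exact h ▸ ha1Y
    · exact (Finset.mem_singleton.mp h) ▸ ha2Y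

lemma ev_partition (S : Finset α) (h2 : 2 ≤ S.card) :
    ∑ X ∈ S.powersetCard 2, (Ev X (S \ X)).card = Fintype.card (Equiv.Perm α) := by
  classical
  choose f hf using ev_exists_unique S h2
  rw [Fintype.card, Finset.card_eq_sum_card_fiberwise
    (f := f) (t := S.powersetCard 2) (fun σ _ => (hf σ).1.1)]
  refine Finset.sum_congr rfl (fun X hX => ?_)
  congr 1
  ext σ
  simp only [Finset.mem_filter, Finset.mem_univ, true_and]
  constructor
  · intro h; exact ((hf σ).2 X hX h).symm
  · rintro rfl; exact (hf σ).1.2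

lemma exists_perm_pair (a b c d : α) (hab : a ≠ b) (hcd : c ≠ d) :
    ∃ π : Equiv.Perm α, π a = c ∧ π b = d ∧
      ∀ z, z ≠ a → z ≠ b → z ≠ c → z ≠ d → π z = z := by
  set s := Equiv.swap a c with hs
  have hsb_ne_c : s b ≠ c := by
    intro h
    have : s b = s a := by rw [h, hs, Equiv.swap_apply_left]
    exact hab (s.injective this).symm
  refine ⟨s.trans (Equiv.swap (s b) d), ?_, ?_, ?_⟩
  · simp only [Equiv.trans_apply, hs, Equiv.swap_apply_left]
    exact Equiv.swap_apply_of_ne_of_ne (Ne.symm hsb_ne_c) hcd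
  · simp only [Equiv.trans_apply, Equiv.swap_apply_left]
  · intro z hza hzb hzc hzd
    have h1 : s z = z := Equiv.swap_apply_of_ne_of_ne hza hzc
    simp only [Equiv.trans_apply, h1]
    refine Equiv.swap_apply_of_ne_of_ne ?_ hzd
    intro h
    have : s z = s (s b) := congrArg s h
    rw [h1, Equiv.swap_apply_self] at this
    exact hzb this

lemma ev_card_transport (S X Y : Finset α) (hX : X ∈ S.powersetCard 2)
    (hY : Y ∈ S.powersetCard 2) :
    (Ev X (S \ X)).card = (Ev Y (S \ Y)).card := by
  obtain ⟨hXS, hXcard⟩ := Finset.mem_powersetCard.mp hX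
  obtain ⟨hYS, hYcard⟩ := Finset.mem_powersetCard.mp hY
  obtain ⟨a, b, hab, rfl⟩ := Finset.card_eq_two.mp hXcard
  obtain ⟨c, d, hcd, rfl⟩ := Finset.card_eq_two.mp hYcard
  obtain ⟨π, hπa, hπb, hπfix⟩ := exists_perm_pair a b c d hab hcd
  have haS : a ∈ S := hXS (by simp)
  have hbS : b ∈ S := hXS (by simp)
  have hcS : c ∈ S := hYS (by simp)
  have hdS : d ∈ S := hYS (by simp)
  -- π maps X into Y, and S \ X into S \ Y
  have hmapX : ∀ x ∈ ({a, b} : Finset α), π x ∈ ({c, d} : Finset α) := by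
    intro x hx
    rcases Finset.mem_insert.mp hx with h | h
    · simp [h, hπa]
    · simp [Finset.mem_singleton.mp h, hπb]
  have hmapS : ∀ z ∈ S, π z ∈ S := by
    intro z hz
    by_cases h : z = a ∨ z = b ∨ z = c ∨ z = d
    · -- π z stays in the quadruple
      by_contra hcon
      have h1 : π (π z) = π z := by
        apply hπfix
        · intro he; exact hcon (he ▸ haS)
        · intro he; exact hcon (he ▸ hbS)
        · intro he; exact hcon (he ▸ hcS)
        · intro he; exact hcon (he ▸ hdS)
      have h2 := π.injective h1
      rw [h2] at hcon
      exact hcon hz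
    · push_neg at h
      rw [hπfix z h.1 h.2.1 h.2.2.1 h.2.2.2]
      exact hz
  have hmapSX : ∀ z ∈ S \ ({a, b} : Finset α), π z ∈ S \ ({c, d} : Finset α) := by
    intro z hz
    obtain ⟨hzS, hzX⟩ := Finset.mem_sdiff.mp hz
    refine Finset.mem_sdiff.mpr ⟨hmapS z hzS, ?_⟩
    intro hc
    rcases Finset.mem_insert.mp hc with h | h
    · exact hzX (by simp [π.injective (h.trans hπa.symm)])
    · exact hzX (by simp [π.injective ((Finset.mem_singleton.mp h).trans hπb.symm)])
  -- the backwards maps, for π.symm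
  have hπa' : π.symm c = a := by rw [← hπa, Equiv.symm_apply_apply]
  have hπb' : π.symm d = b := by rw [← hπb, Equiv.symm_apply_apply]
  have hπfix' : ∀ z, z ≠ a → z ≠ b → z ≠ c → z ≠ d → π.symm z = z := by
    intro z h1 h2 h3 h4
    rw [← hπfix z h1 h2 h3 h4, Equiv.symm_apply_apply, hπfix z h1 h2 h3 h4]
  have hmapY : ∀ y ∈ ({c, d} : Finset α), π.symm y ∈ ({a, b} : Finset α) := by
    intro y hy
    rcases Finset.mem_insert.mp hy with h | h
    · simp [h, hπa']
    · simp [Finset.mem_singleton.mp h, hπb']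
  have hmapS' : ∀ z ∈ S, π.symm z ∈ S := by
    intro z hz
    obtain ⟨w, hw, hwz⟩ : ∃ w ∈ S, π w = z := by
      -- surjectivity of π on S
      by_cases h : z = a ∨ z = b ∨ z = c ∨ z = d
      · -- z in quad: π.symm z in quad ⊆ S
        by_cases h2 : π.symm z = a ∨ π.symm z = b ∨ π.symm z = c ∨ π.symm z = d
        · rcases h2 with h2 | h2 | h2 | h2
          · exact ⟨a, haS, by rw [← h2, Equiv.apply_symm_apply]⟩
          · exact ⟨b, hbS, by rw [← h2, Equiv.apply_symm_apply]⟩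
          · exact ⟨c, hcS, by rw [← h2, Equiv.apply_symm_apply]⟩
          · exact ⟨d, hdS, by rw [← h2, Equiv.apply_symm_apply]⟩
        · push_neg at h2
          have heq := hπfix _ h2.1 h2.2.1 h2.2.2.1 h2.2.2.2
          rw [Equiv.apply_symm_apply] at heq
          refine ⟨z, hz, ?_⟩
          exact (congrArg π heq.symm).symm.trans (π.apply_symm_apply z)
      · push_neg at h
        exact ⟨z, hz, hπfix z h.1 h.2.1 h.2.2.1 h.2.2.2⟩
    rw [← hwz, Equiv.symm_apply_apply]
    exact hw
  have hmapSY : ∀ z ∈ S \ ({c, d} : Finset α), π.symm z ∈ S \ ({a, b} : Finset α) := by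
    intro z hz
    obtain ⟨hzS, hzY⟩ := Finset.mem_sdiff.mp hz
    refine Finset.mem_sdiff.mpr ⟨hmapS' z hzS, ?_⟩
    intro hc
    rcases Finset.mem_insert.mp hc with h | h
    · apply hzY
      have : z = π a := by rw [← h, Equiv.apply_symm_apply]
      simp [this, hπa]
    · apply hzY
      have : z = π b := by rw [← (Finset.mem_singleton.mp h), Equiv.apply_symm_apply]
      simp [this, hπb]
  -- now the bijection between the events
  apply Finset.card_bij' (fun σ _ => π.symm.trans σ) (fun σ _ => π.trans σ)
  · intro σ hσ
    rw [mem_Ev] at hσ ⊢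
    intro x hx z hz
    simpa using hσ (π.symm x) (hmapY x hx) (π.symm z) (hmapSY z hz)
  · intro σ hσ
    rw [mem_Ev] at hσ ⊢
    intro x hx z hz
    simpa using hσ (π x) (hmapX x hx) (π z) (hmapSX z hz)
  · intro σ _; ext x; simp
  · intro σ _; ext x; simp

theorem bollobas_two {ι : Type*} [DecidableEq ι] (I : Finset ι) (b : ℕ)
    (A B : ι → Finset α)
    (hA : ∀ i ∈ I, (A i).card = 2) (hB : ∀ i ∈ I, (B i).card = b)
    (hdisj : ∀ i ∈ I, Disjoint (A i) (B i))
    (hcross : ∀ i ∈ I, ∀ j ∈ I, i ≠ j → ∃ x, x ∈ A i ∧ x ∈ B j) :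
    I.card ≤ (b + 2).choose 2 := by
  classical
  set P := Fintype.card (Equiv.Perm α) with hP
  have hPpos : 0 < P := Fintype.card_pos
  have hScard : ∀ i ∈ I, (A i ∪ B i).card = b + 2 := by
    intro i hi
    rw [Finset.card_union_of_disjoint (hdisj i hi), hA i hi, hB i hi]
    omega
  have hAin : ∀ i ∈ I, A i ∈ (A i ∪ B i).powersetCard 2 := by
    intro i hi
    exact Finset.mem_powersetCard.mpr ⟨Finset.subset_union_left, hA i hi⟩
  have hBeq : ∀ i ∈ I, (A i ∪ B i) \ A i = B i := by
    intro i hi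
    rw [Finset.union_sdiff_cancel_left (hdisj i hi)]
  have key1 : ∀ i ∈ I, (b + 2).choose 2 * (Ev (A i) (B i)).card = P := by
    intro i hi
    have hpart := ev_partition (A i ∪ B i) (by rw [hScard i hi]; omega)
    have hsum : ∑ X ∈ (A i ∪ B i).powersetCard 2, (Ev X ((A i ∪ B i) \ X)).card
        = ∑ X ∈ (A i ∪ B i).powersetCard 2, (Ev (A i) (B i)).card := by
      refine Finset.sum_congr rfl (fun X hX => ?_)
      have h := ev_card_transport _ X (A i) hX (hAin i hi)
      rwa [hBeq i hi] at h
    rw [hsum, Finset.sum_const, smul_eq_mul, Finset.card_powersetCard, hScard i hi] at hpart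
    exact hpart
  have hdisjEv : ∀ i ∈ I, ∀ j ∈ I, i ≠ j →
      Disjoint (Ev (A i) (B i)) (Ev (A j) (B j)) := by
    intro i hi j hj hij
    rw [Finset.disjoint_left]
    intro σ hσi hσj
    obtain ⟨x, hxA, hxB⟩ := hcross i hi j hj hij
    obtain ⟨y, hyA, hyB⟩ := hcross j hj i hi hij.symm
    rw [mem_Ev] at hσi hσj
    exact absurd (hσi x hxA y hyB) (not_lt_of_gt (hσj y hyA x hxB))
  have hsumle : ∑ i ∈ I, (Ev (A i) (B i)).card ≤ P := by
    rw [← Finset.card_biUnion (fun i hi j hj hij => hdisjEv i hi j hj hij)]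
    exact (Finset.card_le_card (Finset.subset_univ _)).trans_eq rfl
  have hfinal : I.card * P ≤ (b + 2).choose 2 * P := by
    calc I.card * P = ∑ i ∈ I, P := by rw [Finset.sum_const, smul_eq_mul]
    _ = ∑ i ∈ I, (b + 2).choose 2 * (Ev (A i) (B i)).card :=
        Finset.sum_congr rfl (fun i hi => (key1 i hi).symm)
    _ = (b + 2).choose 2 * ∑ i ∈ I, (Ev (A i) (B i)).card := by rw [Finset.mul_sum]
    _ ≤ (b + 2).choose 2 * P := Nat.mul_le_mul_left _ hsumle
  exact Nat.le_of_mul_le_mul_right hfinal hPpos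


section GraphSide
open Finset SimpleGraph

variable {n k : ℕ}

lemma sat_witness {G : SimpleGraph (Fin n)} (hfree : G.CliqueFree (k+1))
    {u v : Fin n} (hne : u ≠ v)
    (h : ¬ (G ⊔ SimpleGraph.fromEdgeSet {s(u, v)}).CliqueFree (k + 1)) :
    ∃ W : Finset (Fin n), W.card = k + 1 ∧ u ∈ W ∧ v ∈ W ∧
      ∀ x ∈ W, ∀ y ∈ W, x ≠ y → s(x, y) ≠ s(u, v) → G.Adj x y := by
  rw [SimpleGraph.CliqueFree] at h
  push_neg at h
  obtain ⟨W, hW⟩ := h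
  have hadj : ∀ x ∈ W, ∀ y ∈ W, x ≠ y → s(x, y) ≠ s(u, v) → G.Adj x y := by
    intro x hx y hy hxy hs
    have := hW.1 hx hy hxy
    rw [SimpleGraph.sup_adj, SimpleGraph.fromEdgeSet_adj] at this
    rcases this with h' | h'
    · exact h'
    · exact absurd (Set.mem_singleton_iff.mp h'.1) hs
  have huW : u ∈ W := by
    by_contra hu
    refine hfree W ⟨?_, hW.2⟩
    intro x hx y hy hxy
    refine hadj x hx y hy hxy (fun hs => ?_)
    rcases Sym2.eq_iff.mp hs with ⟨rfl, _⟩ | ⟨_, rfl⟩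
    · exact hu hx
    · exact hu hy
  have hvW : v ∈ W := by
    by_contra hv
    refine hfree W ⟨?_, hW.2⟩
    intro x hx y hy hxy
    refine hadj x hx y hy hxy (fun hs => ?_)
    rcases Sym2.eq_iff.mp hs with ⟨_, rfl⟩ | ⟨rfl, _⟩
    · exact hv hy
    · exact hv hx
  exact ⟨W, hW.2, huW, hvW, hadj⟩

end GraphSide

section Main
open Finset SimpleGraph

variable {n k : ℕ}

lemma compl_card_le (hk : 1 ≤ k) (hn : k + 1 ≤ n) (G : SimpleGraph (Fin n))
    [DecidableRel G.Adj]
    (hfree : G.CliqueFree (k+1))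
    (hsat : ∀ u v : Fin n, u ≠ v → ¬ G.Adj u v →
      ¬ (G ⊔ SimpleGraph.fromEdgeSet {s(u, v)}).CliqueFree (k + 1)) :
    Gᶜ.edgeFinset.card ≤ (n - k + 1).choose 2 := by
  classical
  set NE : Finset (Fin n × Fin n) :=
    Finset.univ.filter (fun p => p.1 < p.2 ∧ ¬ G.Adj p.1 p.2) with hNE
  have hmemNE : ∀ p : Fin n × Fin n, p ∈ NE ↔ p.1 < p.2 ∧ ¬ G.Adj p.1 p.2 := by
    intro p; simp [hNE]
  have hcard : NE.card = Gᶜ.edgeFinset.card := by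
    apply Finset.card_bij (fun p _ => s(p.1, p.2))
    · intro p hp
      rw [hmemNE] at hp
      rw [SimpleGraph.mem_edgeFinset, SimpleGraph.mem_edgeSet, SimpleGraph.compl_adj]
      exact ⟨Fin.ne_of_lt hp.1, hp.2⟩
    · intro p hp q hq hpq
      rw [hmemNE] at hp hq
      rcases Sym2.eq_iff.mp hpq with ⟨h1, h2⟩ | ⟨h1, h2⟩
      · exact Prod.ext h1 h2
      · exfalso
        rw [← h1, ← h2] at hq
        exact absurd hq.1 (not_lt_of_gt hp.1)
    · intro e
      refine Sym2.ind (fun u v he => ?_) e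
      rw [SimpleGraph.mem_edgeFinset, SimpleGraph.mem_edgeSet, SimpleGraph.compl_adj] at he
      rcases lt_or_gt_of_ne he.1 with h | h
      · exact ⟨(u, v), (hmemNE _).mpr ⟨h, he.2⟩, rfl⟩
      · exact ⟨(v, u), (hmemNE _).mpr ⟨h, fun ha => he.2 ha.symm⟩, Sym2.eq_swap⟩
  have hw : ∀ p : Fin n × Fin n, ∃ W : Finset (Fin n), p ∈ NE →
      (W.card = k + 1 ∧ p.1 ∈ W ∧ p.2 ∈ W ∧
        ∀ x ∈ W, ∀ y ∈ W, x ≠ y → s(x, y) ≠ s(p.1, p.2) → G.Adj x y) := by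
    intro p
    by_cases hp : p ∈ NE
    · rw [hmemNE] at hp
      obtain ⟨W, h1, h2, h3, h4⟩ := sat_witness hfree (Fin.ne_of_lt hp.1)
        (hsat p.1 p.2 (Fin.ne_of_lt hp.1) hp.2)
      exact ⟨W, fun _ => ⟨h1, h2, h3, h4⟩⟩
    · exact ⟨∅, fun h => absurd h hp⟩
  choose Wf hWf using hw
  have hbnd : NE.card ≤ (n - (k+1) + 2).choose 2 := by
    apply bollobas_two NE (n - (k+1)) (fun p => {p.1, p.2}) (fun p => Finset.univ \ Wf p)
    · intro p hp
      rw [Finset.card_insert_of_notMem (by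
        simp [Fin.ne_of_lt ((hmemNE p).mp hp).1]), Finset.card_singleton]
    · intro p hp
      rw [Finset.card_sdiff_of_subset (Finset.subset_univ _), Finset.card_univ, Fintype.card_fin,
        (hWf p hp).1]
    · intro p hp
      rw [Finset.disjoint_left]
      intro x hx hx2
      obtain ⟨-, hnot⟩ := Finset.mem_sdiff.mp hx2
      rcases Finset.mem_insert.mp hx with h | h
      · exact hnot (h ▸ (hWf p hp).2.1)
      · exact hnot ((Finset.mem_singleton.mp h) ▸ (hWf p hp).2.2.1)
    · intro p hp q hq hpq
      have hps := ((hmemNE p).mp hp)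
      have hqs := ((hmemNE q).mp hq)
      have hnotboth : p.1 ∉ Wf q ∨ p.2 ∉ Wf q := by
        by_contra hcon
        push_neg at hcon
        have hsne : s(p.1, p.2) ≠ s(q.1, q.2) := by
          intro heq
          rcases Sym2.eq_iff.mp heq with ⟨h1, h2⟩ | ⟨h1, h2⟩
          · exact hpq (Prod.ext h1 h2)
          · rw [h1, h2] at hps
            exact absurd hqs.1 (not_lt_of_gt hps.1)
        exact hps.2 ((hWf q hq).2.2.2 p.1 hcon.1 p.2 hcon.2 (Fin.ne_of_lt hps.1) hsne)
      rcases hnotboth with h | h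
      · exact ⟨p.1, by simp, Finset.mem_sdiff.mpr ⟨Finset.mem_univ _, h⟩⟩
      · exact ⟨p.2, by simp, Finset.mem_sdiff.mpr ⟨Finset.mem_univ _, h⟩⟩
  rw [← hcard]
  have harith : n - (k+1) + 2 = n - k + 1 := by omega
  rw [harith] at hbnd
  exact hbnd

end Main


lemma two_choose_two (x : ℕ) : 2 * x.choose 2 = x * (x - 1) := by
  induction x with
  | zero => simp
  | succ y ih =>
    rw [show (2:ℕ) = 1 + 1 from rfl, Nat.choose_succ_succ, Nat.mul_add, Nat.choose_one_right] at *
    rw [ih]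
    cases y with
    | zero => simp
    | succ z => simp only [Nat.succ_sub_one]; ring

lemma arith_key {n k : ℕ} (hk : 1 ≤ k) (hn : k + 1 ≤ n) :
    (k - 1) * (n - k + 1) + (k - 1).choose 2 + (n - k + 1).choose 2 = n.choose 2 := by
  obtain ⟨a, rfl⟩ : ∃ a, k = a + 1 := ⟨k - 1, by omega⟩
  obtain ⟨t, rfl⟩ : ∃ t, n = a + t + 2 := ⟨n - a - 2, by omega⟩
  have h1 : a + 1 - 1 = a := by omega
  have h2 : a + t + 2 - (a + 1) + 1 = t + 2 := by omega
  rw [h1, h2]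
  apply Nat.eq_of_mul_eq_mul_left (show 0 < 2 by norm_num)
  rw [Nat.mul_add, Nat.mul_add, two_choose_two, two_choose_two, two_choose_two]
  have h3 : a + t + 2 - 1 = a + t + 1 := by omega
  have h4 : t + 2 - 1 = t + 1 := by omega
  rw [h3, h4]
  cases a with
  | zero => simp
  | succ b => simp only [Nat.succ_sub_one]; ring

lemma card_edge_add_compl {n : ℕ} (G : SimpleGraph (Fin n)) [DecidableRel G.Adj] :
    G.edgeFinset.card + Gᶜ.edgeFinset.card = n.choose 2 := by
  classical
  have hdisj : Disjoint G.edgeFinset Gᶜ.edgeFinset :=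
    SimpleGraph.disjoint_edgeFinset.mpr disjoint_compl_right
  rw [← Finset.card_union_of_disjoint hdisj]
  have hun : G.edgeFinset ∪ Gᶜ.edgeFinset = (⊤ : SimpleGraph (Fin n)).edgeFinset := by
    ext e
    refine Sym2.ind (fun x y => ?_) e
    simp only [Finset.mem_union, SimpleGraph.mem_edgeFinset, SimpleGraph.mem_edgeSet,
      SimpleGraph.compl_adj, SimpleGraph.top_adj]
    constructor
    · rintro (h | h)
      · exact G.ne_of_adj h
      · exact h.1
    · intro h
      by_cases ha : G.Adj x y
      · exact Or.inl ha
      · exact Or.inr ⟨h, ha⟩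
  rw [hun, SimpleGraph.card_edgeFinset_top_eq_card_choose_two, Fintype.card_fin]

def exG (n k : ℕ) : SimpleGraph (Fin n) where
  Adj u v := u ≠ v ∧ ((u : ℕ) < k - 1 ∨ (v : ℕ) < k - 1)
  symm := ⟨fun (u v : Fin n) (h : u ≠ v ∧ ((u : ℕ) < k - 1 ∨ (v : ℕ) < k - 1)) => ⟨h.1.symm, h.2.symm⟩⟩
  loopless := ⟨fun u (h : u ≠ u ∧ ((u : ℕ) < k - 1 ∨ (u : ℕ) < k - 1)) => h.1 rfl⟩

instance {n k : ℕ} : DecidableRel (exG n k).Adj := fun u v => by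
  show Decidable (u ≠ v ∧ ((u : ℕ) < k - 1 ∨ (v : ℕ) < k - 1))
  infer_instance

lemma exG_adj {n k : ℕ} {u v : Fin n} :
    (exG n k).Adj u v ↔ u ≠ v ∧ ((u : ℕ) < k - 1 ∨ (v : ℕ) < k - 1) := Iff.rfl

lemma exG_cliqueFree {n k : ℕ} (hk : 1 ≤ k) : (exG n k).CliqueFree (k + 1) := by
  intro s hs
  have hsplit := Finset.card_filter_add_card_filter_not
    (s := s) (p := fun v : Fin n => (v : ℕ) < k - 1)
  have hlow : (s.filter (fun v : Fin n => (v : ℕ) < k - 1)).card ≤ k - 1 := by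
    have hinj : Set.InjOn (fun v : Fin n => (v : ℕ)) ↑(s.filter (fun v : Fin n => (v : ℕ) < k - 1)) :=
      fun x _ y _ h => Fin.ext h
    calc (s.filter (fun v : Fin n => (v : ℕ) < k - 1)).card
        = ((s.filter (fun v : Fin n => (v : ℕ) < k - 1)).image (fun v : Fin n => (v : ℕ))).card :=
          (Finset.card_image_of_injOn hinj).symm
      _ ≤ (Finset.range (k - 1)).card := by
          apply Finset.card_le_card
          intro x hx
          obtain ⟨v, hv, rfl⟩ := Finset.mem_image.mp hx
          exact Finset.mem_range.mpr (Finset.mem_filter.mp hv).2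
      _ = k - 1 := Finset.card_range _
  have hhigh : (s.filter (fun v : Fin n => ¬ (v : ℕ) < k - 1)).card ≤ 1 := by
    rw [Finset.card_le_one]
    intro x hx y hy
    by_contra hne
    obtain ⟨hxs, hxh⟩ := Finset.mem_filter.mp hx
    obtain ⟨hys, hyh⟩ := Finset.mem_filter.mp hy
    have := hs.1 hxs hys hne
    rw [exG_adj] at this
    rcases this.2 with h | h
    · exact hxh h
    · exact hyh h
  have := hs.2
  omega

lemma exG_saturating {n k : ℕ} (hk : 1 ≤ k) (hn : k + 1 ≤ n)
    {u v : Fin n} (hne : u ≠ v) (hnadj : ¬ (exG n k).Adj u v) :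
    ¬ (exG n k ⊔ SimpleGraph.fromEdgeSet {s(u, v)}).CliqueFree (k + 1) := by
  intro hCF
  rw [exG_adj] at hnadj
  push_neg at hnadj
  have hu : ¬ (u : ℕ) < k - 1 := by have := (hnadj hne).1; omega
  have hv : ¬ (v : ℕ) < k - 1 := by have := (hnadj hne).2; omega
  have hlowlt : k - 1 < n := by omega
  set low : Fin n := ⟨k - 1, hlowlt⟩ with hlowdef
  have hmemIio : ∀ w : Fin n, w ∈ Finset.Iio low ↔ (w : ℕ) < k - 1 := by
    intro w
    rw [Finset.mem_Iio]
    exact Iff.rfl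
  set S : Finset (Fin n) := insert u (insert v (Finset.Iio low)) with hSdef
  apply hCF S
  constructor
  · -- clique
    intro x hx y hy hxy
    simp only [hSdef, Finset.coe_insert, Set.mem_insert_iff, Finset.mem_coe] at hx hy
    have hadj_of_low : ∀ a b : Fin n, a ≠ b → ((a : ℕ) < k - 1 ∨ (b : ℕ) < k - 1) →
        (exG n k ⊔ SimpleGraph.fromEdgeSet {s(u, v)}).Adj a b := by
      intro a b hab h
      exact (SimpleGraph.sup_adj _ _ _ _).mpr (Or.inl ⟨hab, h⟩)
    have hnew : (exG n k ⊔ SimpleGraph.fromEdgeSet {s(u, v)}).Adj u v := by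
      apply (SimpleGraph.sup_adj _ _ _ _).mpr
      right
      rw [SimpleGraph.fromEdgeSet_adj]
      exact ⟨rfl, hne⟩
    rcases hx with rfl | rfl | hx
    · rcases hy with rfl | rfl | hy
      · exact absurd rfl hxy
      · exact hnew
      · exact hadj_of_low _ _ hxy (Or.inr ((hmemIio _).mp hy))
    · rcases hy with rfl | rfl | hy
      · exact hnew.symm
      · exact absurd rfl hxy
      · exact hadj_of_low _ _ hxy (Or.inr ((hmemIio _).mp hy))
    · exact hadj_of_low _ _ hxy (Or.inl ((hmemIio _).mp hx))
  · -- card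
    have hvnot : v ∉ Finset.Iio low := fun h => hv ((hmemIio _).mp h)
    have hunot : u ∉ insert v (Finset.Iio low) := by
      intro h
      rcases Finset.mem_insert.mp h with h | h
      · exact hne h
      · exact hu ((hmemIio _).mp h)
    rw [hSdef, Finset.card_insert_of_notMem hunot, Finset.card_insert_of_notMem hvnot,
      Fin.card_Iio]
    show (low : ℕ) + 1 + 1 = k + 1
    rw [hlowdef]
    show k - 1 + 1 + 1 = k + 1
    omega

lemma exG_degree_low {n k : ℕ} (hn : k + 1 ≤ n) {w : Fin n} (hw : (w : ℕ) < k - 1) :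
    (exG n k).degree w = n - 1 := by
  rw [SimpleGraph.degree, SimpleGraph.neighborFinset_eq_filter]
  have : Finset.univ.filter ((exG n k).Adj w) = Finset.univ.erase w := by
    ext u
    simp only [Finset.mem_filter, Finset.mem_univ, true_and, Finset.mem_erase, and_true]
    constructor
    · intro h; exact (Ne.symm h.1)
    · intro h; exact ⟨Ne.symm h, Or.inl hw⟩
  rw [this, Finset.card_erase_of_mem (Finset.mem_univ w), Finset.card_univ, Fintype.card_fin]

lemma exG_degree_high {n k : ℕ} (hn : k + 1 ≤ n) {w : Fin n} (hw : ¬ (w : ℕ) < k - 1) :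
    (exG n k).degree w = k - 1 := by
  rw [SimpleGraph.degree, SimpleGraph.neighborFinset_eq_filter]
  have hlowlt : k - 1 < n := by omega
  have : Finset.univ.filter ((exG n k).Adj w) = Finset.Iio (⟨k - 1, hlowlt⟩ : Fin n) := by
    ext u
    simp only [Finset.mem_filter, Finset.mem_univ, true_and, Finset.mem_Iio]
    constructor
    · intro h
      rcases h.2 with h2 | h2
      · exact absurd h2 hw
      · exact h2
    · intro h
      have hne : w ≠ u := by
        intro he
        rw [← he] at h
        exact hw h
      exact ⟨hne, Or.inr h⟩
  rw [this, Fin.card_Iio]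

lemma exG_card_edges {n k : ℕ} (hk : 1 ≤ k) (hn : k + 1 ≤ n) :
    (exG n k).edgeFinset.card = (k - 1) * (n - k + 1) + (k - 1).choose 2 := by
  have hsum := SimpleGraph.sum_degrees_eq_twice_card_edges (exG n k)
  have hlowlt : k - 1 < n := by omega
  have hfilt : Finset.univ.filter (fun v : Fin n => (v : ℕ) < k - 1)
      = Finset.Iio (⟨k - 1, hlowlt⟩ : Fin n) := by
    ext u
    simp only [Finset.mem_filter, Finset.mem_univ, true_and, Finset.mem_Iio]
    exact Iff.rfl
  have hcardlow : (Finset.univ.filter (fun v : Fin n => (v : ℕ) < k - 1)).card = k - 1 := by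
    rw [hfilt, Fin.card_Iio]
  have hcardhigh : (Finset.univ.filter (fun v : Fin n => ¬ (v : ℕ) < k - 1)).card
      = n - (k - 1) := by
    have := Finset.card_filter_add_card_filter_not
      (s := (Finset.univ : Finset (Fin n))) (p := fun v : Fin n => (v : ℕ) < k - 1)
    rw [Finset.card_univ, Fintype.card_fin, hcardlow] at this
    omega
  have hsplit : ∑ v : Fin n, (exG n k).degree v
      = (k - 1) * (n - 1) + (n - (k - 1)) * (k - 1) := by
    rw [← Finset.sum_filter_add_sum_filter_not Finset.univ (fun v : Fin n => (v : ℕ) < k - 1)]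
    congr 1
    · rw [Finset.sum_congr rfl (fun v hv => exG_degree_low hn (Finset.mem_filter.mp hv).2),
        Finset.sum_const, hcardlow, smul_eq_mul]
    · rw [Finset.sum_congr rfl (fun v hv => exG_degree_high hn (Finset.mem_filter.mp hv).2),
        Finset.sum_const, hcardhigh, smul_eq_mul]
  rw [hsplit] at hsum
  apply Nat.eq_of_mul_eq_mul_left (show 0 < 2 by norm_num)
  rw [← hsum, Nat.mul_add, two_choose_two]
  obtain ⟨a, rfl⟩ : ∃ a, k = a + 1 := ⟨k - 1, by omega⟩
  obtain ⟨t, rfl⟩ : ∃ t, n = a + t + 2 := ⟨n - a - 2, by omega⟩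
  have h1 : a + 1 - 1 = a := by omega
  have h2 : a + t + 2 - (a + 1) + 1 = t + 2 := by omega
  have h3 : a + t + 2 - 1 = a + t + 1 := by omega
  have h4 : a + t + 2 - a = t + 2 := by omega
  rw [h1, h2, h3, h4]
  cases a with
  | zero => simp
  | succ b => simp only [Nat.succ_sub_one]; ring


/-- Erdős–Hajnal–Moon: the minimum number of edges of a `K_{k+1}`-saturated graph on
`n ≥ k+1` vertices is `(k-1)(n-k+1) + C(k-1,2)`. -/
theorem erdos_hajnal_moon (n k : ℕ) (hk : 1 ≤ k) (hn : k + 1 ≤ n) :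
    (∀ G : SimpleGraph (Fin n), IsCliqueSaturated G k →
      (k - 1) * (n - k + 1) + (k - 1).choose 2 ≤ G.edgeSet.ncard) ∧
    (∃ G : SimpleGraph (Fin n), IsCliqueSaturated G k ∧
      G.edgeSet.ncard = (k - 1) * (n - k + 1) + (k - 1).choose 2) := by
  constructor
  · intro G hsat
    classical
    letI : DecidableRel G.Adj := Classical.decRel _
    have h1 := compl_card_le hk hn G hsat.1 hsat.2
    have h2 := card_edge_add_compl G
    have h3 := arith_key hk hn
    have h4 : G.edgeSet.ncard = G.edgeFinset.card := by
      rw [← SimpleGraph.coe_edgeFinset, Set.ncard_coe_finset]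
    omega
  · refine ⟨exG n k, ⟨exG_cliqueFree hk, fun u v hne hnadj => exG_saturating hk hn hne hnadj⟩, ?_⟩
    have h4 : (exG n k).edgeSet.ncard = (exG n k).edgeFinset.card := by
      rw [← SimpleGraph.coe_edgeFinset, Set.ncard_coe_finset]
    rw [h4]
    exact exG_card_edges hk hn
end
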